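/- arXiv:2111.06148 — 10 statements merged into one kernel-verified Lean document; each statement's English description precedes it below -/
import Mathlib

section
/- Let (E,𝓔) be a countably generated measurable space, let μ be an atomless σ-finite measure on it, let Q(x,dy) = q(x,y)μ(dy) be a μ-reversible Markov kernel with jointly measurable density q, and let Π(dx) = π(x)μ(dx) be a probability measure whose density satisfies μ-ess sup π = +∞. Then the Metropolis kernel P with proposal Q and acceptance probability α(x,y) = min{1, π(y)/π(x)} is not uniformly ergodic; that is, it is NOT the case that sup_{x∈E} sup_{A∈𝓔} |P^m(x,A) − Π(A)| → 0 as m → ∞. -/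
open MeasureTheory ProbabilityTheory
open scoped ENNReal

/-- The `m`-fold composition of a Markov kernel (`kiter P 0` is the identity kernel). -/
noncomputable def kiter {E : Type*} [MeasurableSpace E] (P : Kernel E E) : ℕ → Kernel E E
  | 0 => Kernel.id
  | n + 1 => P ∘ₖ kiter P n

open Filter

/-! From a point of height `π ≥ c R^(k+1)`, one Metropolis step lands below height `c R^k` with
probability at most `1/R`, because a move to `z` is accepted with probability at most
`π z / π x`. So a chain started at `x` with `π x ≥ c R^N` satisfies `P^N(x, {π < c}) ≤ N/R`,
which is small for large `R`, while `Π {π < c}` is close to `1` for large `c`; since `ess sup π = ∞`, such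
starting points exist for every `N`, contradicting uniform convergence. -/

section Metropolis

variable {E : Type*} [MeasurableSpace E]

theorem eventually_lt_measure_setOf_lt_natCast {ν : Measure E} {f : E → ℝ≥0∞}
    (hf : ∀ᵐ x ∂ν, f x < ⊤) {a : ℝ≥0∞} (ha : a < ν Set.univ) :
    ∀ᶠ n : ℕ in atTop, a < ν {x | f x < n} := by
  have hmono : Monotone fun n : ℕ => {x | f x < n} := fun _ _ hmn =>
    Set.ofPred_subset_ofPred.mpr fun _ hx => hx.trans_le (by exact_mod_cast hmn)
  have hunion : ⋃ n : ℕ, {x | f x < n} = {x | f x < ⊤} := by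
    ext x
    simp only [Set.mem_iUnion, Set.mem_ofPred_eq]
    exact ⟨fun ⟨n, hn⟩ => hn.trans (ENNReal.natCast_lt_top n),
      fun h => ENNReal.exists_nat_gt h.ne⟩
  have hlim := tendsto_measure_iUnion_atTop (μ := ν) hmono
  rw [hunion, measure_congr (ae_eq_univ.mpr hf)] at hlim
  exact hlim.eventually (lt_mem_nhds ha)

def IsMetropolisKernel (Q : Kernel E E) (π : E → ℝ≥0∞) (P : Kernel E E) : Prop :=
  ∀ (x : E) (A : Set E), MeasurableSet A →
    P x A = Measure.dirac x A * (1 - ∫⁻ y, min 1 (π y / π x) ∂(Q x))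
      + ∫⁻ y in A, min 1 (π y / π x) ∂(Q x)

instance isMarkovKernel_kiter (P : Kernel E E) [IsMarkovKernel P] (m : ℕ) :
    IsMarkovKernel (kiter P m) := by
  induction m with
  | zero => exact inferInstanceAs (IsMarkovKernel Kernel.id)
  | succ n ih => exact inferInstanceAs (IsMarkovKernel (P ∘ₖ kiter P n))

theorem ProbabilityTheory.Kernel.comp_apply_le_add {α β γ : Type*} [MeasurableSpace α]
    [MeasurableSpace β] [MeasurableSpace γ] {κ : Kernel α β} {η : Kernel β γ}
    [IsMarkovKernel κ] [IsMarkovKernel η]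
    {A : Set γ} (hA : MeasurableSet A) (B : Set β) {ε : ℝ≥0∞} (hε : ∀ y ∉ B, η y A ≤ ε)
    (x : α) : (η ∘ₖ κ) x A ≤ κ x B + ε := by
  rw [Kernel.comp_apply' _ _ _ hA]
  calc ∫⁻ y, η y A ∂κ x ≤ ∫⁻ y, B.indicator 1 y + ε ∂κ x := by
        refine lintegral_mono fun y => ?_
        by_cases hy : y ∈ B
        · simpa [hy] using le_add_right prob_le_one
        · simpa [hy] using hε y hy
    _ ≤ κ x B + ε := by
        rw [lintegral_add_right _ measurable_const, MeasureTheory.lintegral_const, measure_univ,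
          mul_one]
        gcongr
        exact lintegral_indicator_one_le B

namespace IsMetropolisKernel

variable {Q : Kernel E E} [IsMarkovKernel Q] {π : E → ℝ≥0∞} {P : Kernel E E}

theorem isMarkovKernel (hP : IsMetropolisKernel Q π P) : IsMarkovKernel P where
  isProbabilityMeasure x := by
    have hacc : ∫⁻ y, min 1 (π y / π x) ∂(Q x) ≤ 1 :=
      (lintegral_mono fun y => min_le_left _ _).trans (by simp)
    constructor
    rw [hP x Set.univ MeasurableSet.univ, setLIntegral_univ,
      Measure.dirac_apply_of_mem (Set.mem_univ x), one_mul, tsub_add_cancel_of_le hacc]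

theorem apply_setOf_lt_le (hP : IsMetropolisKernel Q π P) (hπ : Measurable π) {c : ℝ≥0∞}
    {y : E} (hy : c ≤ π y) : P y {z | π z < c} ≤ c / π y := by
  have hA : MeasurableSet {z | π z < c} := hπ measurableSet_Iio
  have hyA : y ∉ {z | π z < c} := not_lt.mpr hy
  rw [hP y _ hA, Measure.dirac_apply' _ hA, Set.indicator_of_notMem hyA, zero_mul, zero_add]
  calc ∫⁻ z in {z | π z < c}, min 1 (π z / π y) ∂(Q y)
      ≤ ∫⁻ _ in {z | π z < c}, c / π y ∂(Q y) :=
        setLIntegral_mono' hA fun z hz =>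
          (min_le_right _ _).trans (ENNReal.div_le_div_right (le_of_lt hz) _)
    _ ≤ c / π y := by
        rw [setLIntegral_const]
        exact mul_le_of_le_one_right' prob_le_one

theorem kiter_apply_setOf_lt_le (hP : IsMetropolisKernel Q π P) (hπ : Measurable π)
    {R : ℝ≥0∞} (hR₁ : 1 ≤ R) (hR : R ≠ ⊤) (m : ℕ) {c : ℝ≥0∞} (hc₀ : c ≠ 0) (hc : c ≠ ⊤)
    {x : E} (hx : c * R ^ m ≤ π x) : kiter P m x {z | π z < c} ≤ m / R := by
  have := hP.isMarkovKernel
  induction m generalizing c with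
  | zero =>
    have hA : MeasurableSet {z | π z < c} := hπ measurableSet_Iio
    have hxA : x ∉ {z | π z < c} := by simpa using hx
    simp [kiter, Kernel.id_apply, Measure.dirac_apply' _ hA, hxA]
  | succ n ih =>
    have hstep : ∀ y ∉ {z | π z < c * R}, P y {z | π z < c} ≤ 1 / R := by
      intro y hy
      calc P y {z | π z < c} ≤ c / π y :=
            hP.apply_setOf_lt_le hπ (le_mul_of_one_le_right' hR₁ |>.trans (not_lt.mp hy))
        _ ≤ c / (c * R) := ENNReal.div_le_div_left (not_lt.mp hy) c
        _ = 1 / R := by rw [← ENNReal.mul_div_mul_left 1 R hc₀ hc, mul_one]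
    calc kiter P (n + 1) x {z | π z < c}
        ≤ kiter P n x {z | π z < c * R} + 1 / R :=
          Kernel.comp_apply_le_add (hπ measurableSet_Iio) _ hstep x
      _ ≤ n / R + 1 / R := by
          gcongr
          exact ih (mul_ne_zero hc₀ (one_pos.trans_le hR₁).ne') (ENNReal.mul_ne_top hc hR)
            (by rwa [mul_assoc, ← pow_succ'])
      _ = (n + 1 : ℕ) / R := by rw [ENNReal.div_add_div_same]; norm_cast

end IsMetropolisKernel

end Metropolis

theorem stmt_0_general {E : Type*} [MeasurableSpace E]
    (μ : Measure E)
    (Q : Kernel E E) [IsMarkovKernel Q]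
    (π : E → ℝ≥0∞) (hπ_meas : Measurable π)
    (Ppi : Measure E) (hPpi : Ppi = μ.withDensity π) [IsProbabilityMeasure Ppi]
    (hess : essSup π μ = ⊤)
    (P : Kernel E E)
    (hP : ∀ (x : E) (A : Set E), MeasurableSet A →
      P x A = Measure.dirac x A * (1 - ∫⁻ y, min 1 (π y / π x) ∂(Q x))
        + ∫⁻ y in A, min 1 (π y / π x) ∂(Q x)) :
    ¬ (∀ ε : ℝ, 0 < ε → ∃ N : ℕ, ∀ m ≥ N, ∀ (x : E) (A : Set E), MeasurableSet A →
        |((kiter P m) x A).toReal - (Ppi A).toReal| ≤ ε) := by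
  intro H
  obtain ⟨N, hN⟩ := H (1 / 4) (by norm_num)
  have hπ_fin : ∀ᵐ x ∂Ppi, π x < ⊤ := by
    refine hPpi ▸ (withDensity_absolutelyContinuous μ π).ae_le (ae_lt_top hπ_meas ?_)
    rw [← setLIntegral_univ, ← withDensity_apply _ MeasurableSet.univ, ← hPpi]
    exact measure_ne_top _ _
  obtain ⟨c, hc, hc₁⟩ := ((eventually_lt_measure_setOf_lt_natCast hπ_fin (a := 3 / 4)
    (by rw [measure_univ, ENNReal.div_lt_iff (by norm_num) (by norm_num)]; norm_num)).and
    (eventually_ge_atTop 1)).exists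
  set R : ℝ≥0∞ := 4 * (N + 1)
  have hR₁ : 1 ≤ R := le_mul_of_one_le_of_le (by norm_num) le_add_self
  have hR : R ≠ ⊤ := by finiteness
  obtain ⟨x, hx⟩ : ∃ x, (c : ℝ≥0∞) * R ^ N < π x :=
    lt_iSup_iff.mp ((by finiteness : (c : ℝ≥0∞) * R ^ N ≠ ⊤).lt_top.trans_le
      (hess ▸ essSup_le_iSup))
  have hNR : (N : ℝ≥0∞) / R ≤ 1 / 4 := by
    rw [ENNReal.div_le_iff (by positivity) hR, ← mul_assoc,
      ENNReal.div_mul_cancel (by norm_num) (by norm_num), one_mul]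
    exact le_self_add
  have hlow : (kiter P N x {z | π z < c}).toReal ≤ 1 / 4 := by
    have hc₀ : (c : ℝ≥0∞) ≠ 0 := Nat.cast_ne_zero.mpr (by omega)
    have := IsMetropolisKernel.kiter_apply_setOf_lt_le hP hπ_meas hR₁ hR N hc₀ (by simp) hx.le
    simpa using ENNReal.toReal_mono (by norm_num) (this.trans hNR)
  have hhigh : 3 / 4 < (Ppi {z | π z < c}).toReal := by
    simpa using (ENNReal.toReal_lt_toReal (by finiteness) (measure_ne_top _ _)).2 hc
  have hclose := abs_le.mp (hN N le_rfl x {z | π z < c} (hπ_meas measurableSet_Iio))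
  linarith [hclose.1]

/-- If the target density `π` with respect to the reference measure `μ` satisfies
`μ-ess sup π = +∞`, then the Metropolis kernel `P` with a `μ`-reversible proposal kernel
`Q(x,dy) = q(x,y)μ(dy)` is not uniformly ergodic: it is not the case that
`sup_x sup_A |P^m(x,A) − Π(A)| → 0` as `m → ∞`. -/
theorem stmt_0 {E : Type*} [MeasurableSpace E] [MeasurableSpace.CountablyGenerated E]
    (μ : Measure E) [SigmaFinite μ] [NullSingletonClass μ]
    (Q : Kernel E E) [IsMarkovKernel Q]
    (q : E → E → ℝ≥0∞) (hq_meas : Measurable (Function.uncurry q))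
    (hQq : ∀ x : E, (Q x : Measure E) = μ.withDensity (q x))
    (hQrev : ∀ A B : Set E, MeasurableSet A → MeasurableSet B →
      ∫⁻ x in A, Q x B ∂μ = ∫⁻ x in B, Q x A ∂μ)
    (π : E → ℝ≥0∞) (hπ_meas : Measurable π)
    (Ppi : Measure E) (hPpi : Ppi = μ.withDensity π) [IsProbabilityMeasure Ppi]
    (hess : essSup π μ = ⊤)
    (P : Kernel E E)
    (hP : ∀ (x : E) (A : Set E), MeasurableSet A →
      P x A = Measure.dirac x A * (1 - ∫⁻ y, min 1 (π y / π x) ∂(Q x))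
        + ∫⁻ y in A, min 1 (π y / π x) ∂(Q x)) :
    ¬ (∀ ε : ℝ, 0 < ε → ∃ N : ℕ, ∀ m ≥ N, ∀ (x : E) (A : Set E), MeasurableSet A →
        |((kiter P m) x A).toReal - (Ppi A).toReal| ≤ ε) :=
  stmt_0_general μ Q π hπ_meas Ppi hPpi hess P hP
end

section
/- Let μ be a σ-finite measure on a measurable space (E,𝓔) and let κ : E → E be a μ-reversible transform with κ∘κ = id. If ψ : E → E is a μ-measure-preserving transform satisfying κ∘ψ∘κ∘ψ(x) = x for μ-almost every x, then ψ is a (μ,κ)-reversible transform. -/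
open MeasureTheory

/-- A transform `Φ` is `μ`-reversible if `μ(A ∩ Φ⁻¹(B)) = μ(B ∩ Φ⁻¹(A))` for all
measurable `A`, `B`. -/
def MeasRev {E : Type*} [MeasurableSpace E] (μ : Measure E) (Φ : E → E) : Prop :=
  ∀ A B : Set E, MeasurableSet A → MeasurableSet B → μ (A ∩ Φ ⁻¹' B) = μ (B ∩ Φ ⁻¹' A)

/-- A transform `Φ` is `(μ,κ)`-reversible if `κ ∘ Φ` is `μ`-reversible. -/
def FlipRev {E : Type*} [MeasurableSpace E] (μ : Measure E) (κ Φ : E → E) : Prop :=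
  MeasRev μ (κ ∘ Φ)

/-- If a `μ`-measure-preserving transform `ψ` satisfies `κ∘ψ∘κ∘ψ = id` μ-a.e.,
then `ψ` is `(μ,κ)`-reversible. -/
theorem stmt_2 {E : Type*} [MeasurableSpace E] (μ : Measure E) [SigmaFinite μ]
    (κ : E → E) (hκ_meas : Measurable κ) (hκ_bij : Function.Bijective κ)
    (hκκ : κ ∘ κ = id) (hκ_rev : MeasRev μ κ)
    (ψ : E → E) (hψ_bij : Function.Bijective ψ)
    (hψ_mp : MeasurePreserving ψ μ μ)
    (h : ∀ᵐ x ∂μ, κ (ψ (κ (ψ x))) = x) :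
    FlipRev μ κ ψ := by
  intro A B hA hB
  have hψm := hψ_mp.measurable
  have hκ_mp : ∀ S : Set E, MeasurableSet S → μ (κ ⁻¹' S) = μ S := by
    intro S hS
    have := hκ_rev S Set.univ hS MeasurableSet.univ
    simpa using this.symm
  have hCB : MeasurableSet (ψ ⁻¹' (κ ⁻¹' A) ∩ B) :=
    ((hκ_meas hA).preimage hψm).inter hB
  have h1 : μ (A ∩ (κ ∘ ψ) ⁻¹' B) = μ (ψ ⁻¹' (κ ⁻¹' (ψ ⁻¹' (κ ⁻¹' A) ∩ B))) := by
    apply measure_congr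
    filter_upwards [h] with x hx
    simp only [Set.mem_inter_iff, Set.mem_preimage, Function.comp_apply, eq_iff_iff]
    constructor
    · rintro ⟨ha, hb⟩
      refine ⟨?_, hb⟩
      show κ (ψ (κ (ψ x))) ∈ A
      rw [hx]; exact ha
    · rintro ⟨ha, hb⟩
      have ha' : κ (ψ (κ (ψ x))) ∈ A := ha
      rw [hx] at ha'
      exact ⟨ha', hb⟩
  rw [h1, hψ_mp.measure_preimage (hCB.preimage hκ_meas).nullMeasurableSet,
    hκ_mp _ hCB, Set.inter_comm]
  rfl
end

section
/- Let μ be a σ-finite measure on a measurable space (E,𝓔) and let κ : E → E be a μ-reversible transform with κ∘κ = id. If ψ : E → E is a (μ,κ)-reversible transform, then ψ^L (the L-fold composition ψ∘⋯∘ψ) is a (μ,κ)-reversible transform for every L ∈ ℕ. -/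
open MeasureTheory

/-- If `ψ` is `(μ,κ)`-reversible, then so is the `L`-fold iterate `ψ^[L]` for every `L`. -/
theorem stmt_3 {E : Type*} [MeasurableSpace E] (μ : Measure E) [SigmaFinite μ]
    (κ : E → E) (hκ_meas : Measurable κ) (hκ_bij : Function.Bijective κ)
    (hκκ : κ ∘ κ = id) (hκ_rev : MeasRev μ κ)
    (ψ : E → E) (hψ_meas : Measurable ψ) (hψ_bij : Function.Bijective ψ)
    (hψ : FlipRev μ κ ψ) :
    ∀ L : ℕ, FlipRev μ κ (ψ^[L]) := by
  have hkk : ∀ S : Set E, κ ⁻¹' (κ ⁻¹' S) = S := fun S => by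
    rw [← Set.preimage_comp, hκκ, Set.preimage_id]
  have hpres : ∀ S : Set E, MeasurableSet S → μ (κ ⁻¹' S) = μ S := fun S hS => by
    have := hκ_rev Set.univ S MeasurableSet.univ hS
    simpa using this
  intro L
  induction L with
  | zero =>
    intro A B hA hB
    simpa using hκ_rev A B hA hB
  | succ L ih =>
    intro A B hA hB
    have hψL : Measurable (ψ^[L]) := hψ_meas.iterate L
    set C : Set E := κ ⁻¹' (ψ^[L] ⁻¹' (κ ⁻¹' B)) with hC
    set D : Set E := κ ⁻¹' (ψ ⁻¹' (κ ⁻¹' A)) with hD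
    have hCm : MeasurableSet C := hκ_meas (hψL (hκ_meas hB))
    have hDm : MeasurableSet D := hκ_meas (hψ_meas (hκ_meas hA))
    have e1 : (κ ∘ ψ^[L + 1]) ⁻¹' B = (κ ∘ ψ) ⁻¹' C := by
      simp only [hC, Set.preimage_comp, hkk, Function.iterate_succ]
    have e2 : C ∩ (κ ∘ ψ) ⁻¹' A = κ ⁻¹' (D ∩ ψ^[L] ⁻¹' (κ ⁻¹' B)) := by
      simp only [hC, hD, Set.preimage_comp, Set.preimage_inter, hkk]
      exact Set.inter_comm _ _
    have e3 : (κ ∘ ψ^[L]) ⁻¹' D = (κ ∘ ψ^[L + 1]) ⁻¹' A := by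
      rw [Function.iterate_succ']
      simp only [hD, Set.preimage_comp, hkk]
    calc μ (A ∩ (κ ∘ ψ^[L + 1]) ⁻¹' B)
        = μ (A ∩ (κ ∘ ψ) ⁻¹' C) := by rw [e1]
      _ = μ (C ∩ (κ ∘ ψ) ⁻¹' A) := hψ A C hA hCm
      _ = μ (κ ⁻¹' (D ∩ ψ^[L] ⁻¹' (κ ⁻¹' B))) := by rw [e2]
      _ = μ (D ∩ (κ ∘ ψ^[L]) ⁻¹' B) := by
            rw [hpres _ (hDm.inter (hψL (hκ_meas hB)))]; rfl
      _ = μ (B ∩ (κ ∘ ψ^[L]) ⁻¹' D) := ih D B hDm hB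
      _ = μ (B ∩ (κ ∘ ψ^[L + 1]) ⁻¹' A) := by rw [e3]
end

section
/- Let μ be a σ-finite measure on a measurable space (E,𝓔) and let κ : E → E be a μ-reversible transform with κ∘κ = id. If ψ₁ and ψ₂ are (μ,κ)-reversible transforms, then the composition ψ₁∘ψ₂∘ψ₁ is a (μ,κ)-reversible transform. -/
open MeasureTheory

/-!
Put `α = κ ∘ ψ₁` and `β = κ ∘ ψ₂`. Since `κ ∘ κ = id`, `κ ∘ ψ₁ ∘ ψ₂ ∘ ψ₁ = α ∘ (κ ∘ β ∘ κ) ∘ α`,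
so it suffices that `μ`-reversibility is stable under palindromic compositions `S ∘ R ∘ S`.
This holds because `μ(A ∩ (S ∘ R ∘ S)⁻¹ B)` turns into `μ(B ∩ (S ∘ R ∘ S)⁻¹ A)` by applying
the reversibility of `S`, then of `R`, then of `S` again.
-/

theorem MeasRev.palindrome {E : Type*} [MeasurableSpace E] {μ : Measure E} {S R : E → E}
    (hS : MeasRev μ S) (hS_meas : Measurable S) (hR : MeasRev μ R) (hR_meas : Measurable R) :
    MeasRev μ (S ∘ R ∘ S) := by
  intro A B hA hB
  have hSA := hA.preimage hS_meas
  have hSB := hB.preimage hS_meas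
  calc μ (A ∩ S ⁻¹' (R ⁻¹' (S ⁻¹' B)))
      = μ (R ⁻¹' (S ⁻¹' B) ∩ S ⁻¹' A) := hS _ _ hA (hSB.preimage hR_meas)
    _ = μ (S ⁻¹' A ∩ R ⁻¹' (S ⁻¹' B)) := by rw [Set.inter_comm]
    _ = μ (S ⁻¹' B ∩ R ⁻¹' (S ⁻¹' A)) := hR _ _ hSA hSB
    _ = μ (R ⁻¹' (S ⁻¹' A) ∩ S ⁻¹' B) := by rw [Set.inter_comm]
    _ = μ (B ∩ S ⁻¹' (R ⁻¹' (S ⁻¹' A))) := hS _ _ (hSA.preimage hR_meas) hB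

theorem stmt_4_general {E : Type*} [MeasurableSpace E] (μ : Measure E)
    (κ : E → E) (hκ_meas : Measurable κ)
    (hκκ : κ ∘ κ = id) (hκ_rev : MeasRev μ κ)
    (ψ₁ ψ₂ : E → E) (hψ₁_meas : Measurable ψ₁) (hψ₂_meas : Measurable ψ₂)
    (hψ₁ : FlipRev μ κ ψ₁) (hψ₂ : FlipRev μ κ ψ₂) :
    FlipRev μ κ (ψ₁ ∘ ψ₂ ∘ ψ₁) := by
  have hκκ' : ∀ x, κ (κ x) = x := congrFun hκκ
  have hα_meas : Measurable (κ ∘ ψ₁) := hκ_meas.comp hψ₁_meas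
  have hβ_meas : Measurable (κ ∘ ψ₂) := hκ_meas.comp hψ₂_meas
  have hmid : MeasRev μ (κ ∘ (κ ∘ ψ₂) ∘ κ) := hκ_rev.palindrome hκ_meas hψ₂ hβ_meas
  have hfactor : κ ∘ (ψ₁ ∘ ψ₂ ∘ ψ₁) = (κ ∘ ψ₁) ∘ (κ ∘ (κ ∘ ψ₂) ∘ κ) ∘ (κ ∘ ψ₁) := by
    funext x
    simp only [Function.comp_apply, hκκ']
  rw [FlipRev, hfactor]
  exact hψ₁.palindrome hα_meas hmid (hκ_meas.comp (hβ_meas.comp hκ_meas))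

/-- If `ψ₁, ψ₂` are `(μ,κ)`-reversible transforms, then so is `ψ₁ ∘ ψ₂ ∘ ψ₁`. -/
theorem stmt_4 {E : Type*} [MeasurableSpace E] (μ : Measure E) [SigmaFinite μ]
    (κ : E → E) (hκ_meas : Measurable κ) (hκ_bij : Function.Bijective κ)
    (hκκ : κ ∘ κ = id) (hκ_rev : MeasRev μ κ)
    (ψ₁ ψ₂ : E → E) (hψ₁_meas : Measurable ψ₁) (hψ₂_meas : Measurable ψ₂)
    (hψ₁_bij : Function.Bijective ψ₁) (hψ₂_bij : Function.Bijective ψ₂)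
    (hψ₁ : FlipRev μ κ ψ₁) (hψ₂ : FlipRev μ κ ψ₂) :
    FlipRev μ κ (ψ₁ ∘ ψ₂ ∘ ψ₁) :=
  stmt_4_general μ κ hκ_meas hκκ hκ_rev ψ₁ ψ₂ hψ₁_meas hψ₂_meas hψ₁ hψ₂
end

section
/- Let μ and ν be σ-finite measures on a measurable space (E,𝓔) with ν ≪ μ and density p(x) = dν/dμ(x), and let κ : E → E be a μ-reversible transform with κ∘κ = id. If ψ : E → E is (μ,κ)-reversible and p(x) = p(κ(x)) and p(x) = p(ψ(x)) for μ-almost every x, then ψ is (ν,κ)-reversible. -/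
open MeasureTheory

/-!
With `Φ := κ ∘ ψ`, which is `μ`-reversible, reversibility says exactly that pushing `μ|_A`
forward along `Φ` gives `μ|_{Φ⁻¹ A}`; in particular `Φ`, `κ` and hence `ψ = κ ∘ Φ` preserve `μ`.
So the density `p` is a.e. `Φ`-invariant, and then
`ν(A ∩ Φ⁻¹ B) = ∫_{A ∩ Φ⁻¹ B} p ∘ Φ dμ = ∫_B p d(Φ_* μ|_A) = ∫_{B ∩ Φ⁻¹ A} p dμ = ν(B ∩ Φ⁻¹ A)`.
-/

namespace MeasRev

variable {E : Type*} [MeasurableSpace E] {μ : Measure E} {Φ : E → E}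

theorem map_restrict (hΦ : Measurable Φ) (h : MeasRev μ Φ) {A : Set E}
    (hA : MeasurableSet A) : (μ.restrict A).map Φ = μ.restrict (Φ ⁻¹' A) := by
  ext B hB
  rw [Measure.map_apply hΦ hB, Measure.restrict_apply (hΦ hB), Measure.restrict_apply hB,
    Set.inter_comm, h A B hA hB]

theorem measurePreserving (hΦ : Measurable Φ) (h : MeasRev μ Φ) : MeasurePreserving Φ μ μ :=
  ⟨hΦ, by simpa using h.map_restrict hΦ MeasurableSet.univ⟩

theorem withDensity (hΦ : Measurable Φ) (h : MeasRev μ Φ) {f : E → ENNReal}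
    (hf : Measurable f) (hfΦ : f ∘ Φ =ᵐ[μ] f) : MeasRev (μ.withDensity f) Φ := by
  intro A B hA hB
  rw [withDensity_apply _ (hA.inter (hΦ hB)), withDensity_apply _ (hB.inter (hΦ hA))]
  calc ∫⁻ x in A ∩ Φ ⁻¹' B, f x ∂μ
      = ∫⁻ x in A ∩ Φ ⁻¹' B, f (Φ x) ∂μ :=
        lintegral_congr_ae (ae_restrict_of_ae (hfΦ.mono fun x hx => hx.symm))
    _ = ∫⁻ y in B, f y ∂(μ.restrict A).map Φ := by
        rw [setLIntegral_map hB hf hΦ, Measure.restrict_restrict (hΦ hB), Set.inter_comm]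
    _ = ∫⁻ y in B ∩ Φ ⁻¹' A, f y ∂μ := by
        rw [h.map_restrict hΦ hA, Measure.restrict_restrict hB]

end MeasRev

theorem stmt_5_general {E : Type*} [MeasurableSpace E] (μ ν : Measure E)
    [SigmaFinite μ] [SigmaFinite ν] (hac : ν ≪ μ)
    (κ : E → E) (hκ_meas : Measurable κ)
    (hκκ : κ ∘ κ = id) (hκ_rev : MeasRev μ κ)
    (ψ : E → E) (hψ_meas : Measurable ψ)
    (hψ : FlipRev μ κ ψ)
    (hpκ : ∀ᵐ x ∂μ, ν.rnDeriv μ (κ x) = ν.rnDeriv μ x)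
    (hpψ : ∀ᵐ x ∂μ, ν.rnDeriv μ (ψ x) = ν.rnDeriv μ x) :
    FlipRev ν κ ψ := by
  have hΦ_meas : Measurable (κ ∘ ψ) := hκ_meas.comp hψ_meas
  have hψ_eq : ψ = κ ∘ (κ ∘ ψ) := by rw [← Function.comp_assoc, hκκ, Function.id_comp]
  have hψ_pres : MeasurePreserving ψ μ μ := by
    rw [hψ_eq]
    exact (hκ_rev.measurePreserving hκ_meas).comp (hψ.measurePreserving hΦ_meas)
  have hpΦ : ν.rnDeriv μ ∘ (κ ∘ ψ) =ᵐ[μ] ν.rnDeriv μ := by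
    filter_upwards [hψ_pres.quasiMeasurePreserving.ae hpκ, hpψ] with x hκx hψx
    exact hκx.trans hψx
  rw [FlipRev, ← Measure.withDensity_rnDeriv_eq ν μ hac]
  exact hψ.withDensity hΦ_meas (Measure.measurable_rnDeriv ν μ) hpΦ

/-- If `ν ≪ μ` with density `p = dν/dμ`, `ψ` is `(μ,κ)`-reversible and `p` is
a.e. invariant under both `κ` and `ψ`, then `ψ` is `(ν,κ)`-reversible. -/
theorem stmt_5 {E : Type*} [MeasurableSpace E] (μ ν : Measure E)
    [SigmaFinite μ] [SigmaFinite ν] (hac : ν ≪ μ)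
    (κ : E → E) (hκ_meas : Measurable κ) (hκ_bij : Function.Bijective κ)
    (hκκ : κ ∘ κ = id) (hκ_rev : MeasRev μ κ)
    (ψ : E → E) (hψ_meas : Measurable ψ) (hψ_bij : Function.Bijective ψ)
    (hψ : FlipRev μ κ ψ)
    (hpκ : ∀ᵐ x ∂μ, ν.rnDeriv μ (κ x) = ν.rnDeriv μ x)
    (hpψ : ∀ᵐ x ∂μ, ν.rnDeriv μ (ψ x) = ν.rnDeriv μ x) :
    FlipRev ν κ ψ :=
  stmt_5_general μ ν hac κ hκ_meas hκκ hκ_rev ψ hψ_meas hψ hpκ hpψ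
end

section
/- Let μ be a probability measure on (E,𝓔), where E is a measurable abelian group with measurable negation, and let κ(x,v) = (x,−v) on E². Let Φ : E² → E² be a (μ⊗μ,κ)-reversible transform. Let Π(dx) = exp(−U(x))μ(dx) and λ(dv) = exp(−K(v))μ(dv) be probability measures with K(v) = K(−v), and set H(x,v) = U(x) + K(v). Then the augmented Metropolis–Hastings kernel P(x,A) = δ_x(A)(1 − ∫_E λ(dv) α((x,v),Φ(x,v))) + ∫_E 1{Φ(x,v) ∈ A×E} λ(dv) α((x,v),Φ(x,v)), with acceptance probability α(z,z') = min{1, exp(−H(z') + H(z))}, is a Π-reversible Markov kernel on (E,𝓔). -/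
open MeasureTheory
open scoped ENNReal

/-!
Under `Π ⊗ λ` the pair `z = (x, v)` has density `exp (-H z)` with respect to `μ ⊗ μ`, and
`exp (-H z) * α(z, Φ z) = min (exp (-H z)) (exp (-H (Φ z)))` is symmetric in `z` and `Φ z`.
As `K` is even, `κ` fixes `H` and the first coordinate, so the accepted flux from `A` to `B`
is an integral of a symmetric function of `(z, κ (Φ z))`; reversibility of `κ ∘ Φ` says
exactly that the law of this pair under `μ ⊗ μ` is invariant under swapping, which turns it
into the flux from `B` to `A`. The rejection part `1_A(x) (1 - r x)`, with
`r x = ∫ α((x, v), Φ (x, v)) λ(dv)`, contributes `∫_{A ∩ B} (1 - r) dΠ`, symmetric in `A` and `B`.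
-/

section Reversible

variable {X : Type*} [MeasurableSpace X] {ν : Measure X} [IsFiniteMeasure ν] {Ψ : X → X}

theorem MeasRev.map_swap_graph (hΨ : Measurable Ψ) (hrev : MeasRev ν Ψ) :
    ν.map (fun z => (Ψ z, z)) = ν.map (fun z => (z, Ψ z)) := by
  refine Measure.ext_prod fun {A B} hA hB => ?_
  rw [Measure.map_apply (hΨ.prodMk measurable_id') (hA.prod hB),
    Measure.map_apply (measurable_id'.prodMk hΨ) (hA.prod hB)]
  have hpre : (fun z => (Ψ z, z)) ⁻¹' A ×ˢ B = B ∩ Ψ ⁻¹' A := Set.ext fun _ => and_comm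
  rw [hpre, hrev B A hB hA]
  rfl

theorem MeasRev.lintegral_comp_swap_graph (hΨ : Measurable Ψ) (hrev : MeasRev ν Ψ)
    {F : X × X → ℝ≥0∞} (hF : Measurable F) :
    ∫⁻ z, F (Ψ z, z) ∂ν = ∫⁻ z, F (z, Ψ z) ∂ν := by
  rw [← lintegral_map hF (hΨ.prodMk measurable_id'), hrev.map_swap_graph hΨ,
    lintegral_map hF (measurable_id'.prodMk hΨ)]

theorem MeasRev.lintegral_indicator_mul_symm {Y : Type*} [MeasurableSpace Y]
    (hΨ : Measurable Ψ) (hrev : MeasRev ν Ψ) {p : X → Y} (hp : Measurable p)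
    {m : X × X → ℝ≥0∞} (hm : Measurable m) (hm_symm : ∀ z w, m (z, w) = m (w, z))
    {A B : Set Y} (hA : MeasurableSet A) (hB : MeasurableSet B) :
    ∫⁻ z, A.indicator 1 (p z) * B.indicator 1 (p (Ψ z)) * m (z, Ψ z) ∂ν
      = ∫⁻ z, B.indicator 1 (p z) * A.indicator 1 (p (Ψ z)) * m (z, Ψ z) ∂ν := by
  have hF : Measurable fun q : X × X => A.indicator 1 (p q.1) * B.indicator 1 (p q.2) * m q := by
    fun_prop (disch := assumption)
  rw [← hrev.lintegral_comp_swap_graph hΨ hF]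
  simp only [hm_symm (Ψ _), mul_comm (A.indicator 1 _)]

theorem FlipRev.lintegral_indicator_mul_symm {Y : Type*} [MeasurableSpace Y] {κ Φ : X → X}
    (hκ : Measurable κ) (hΦ : Measurable Φ) (hrev : FlipRev ν κ Φ)
    {p : X → Y} (hp : Measurable p) (hpκ : ∀ z, p (κ z) = p z)
    {m : X × X → ℝ≥0∞} (hm : Measurable m) (hm_symm : ∀ z w, m (z, w) = m (w, z))
    (hmκ : ∀ z w, m (z, κ w) = m (z, w)) {A B : Set Y} (hA : MeasurableSet A)
    (hB : MeasurableSet B) :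
    ∫⁻ z, A.indicator 1 (p z) * B.indicator 1 (p (Φ z)) * m (z, Φ z) ∂ν
      = ∫⁻ z, B.indicator 1 (p z) * A.indicator 1 (p (Φ z)) * m (z, Φ z) ∂ν := by
  simpa only [Function.comp_apply, hpκ, hmκ] using
    MeasRev.lintegral_indicator_mul_symm (hκ.comp hΦ) hrev hp hm hm_symm hA hB

end Reversible

theorem ENNReal.ofReal_exp_neg_mul_min_one (a b : ℝ) :
    ENNReal.ofReal (Real.exp (-a)) * ENNReal.ofReal (min 1 (Real.exp (-b + a)))
      = ENNReal.ofReal (min (Real.exp (-a)) (Real.exp (-b))) := by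
  rw [← ENNReal.ofReal_mul (Real.exp_nonneg _), mul_min_of_nonneg _ _ (Real.exp_nonneg _),
    mul_one, ← Real.exp_add, add_left_comm, neg_add_cancel, add_zero]

theorem lintegral_lintegral_withDensity_withDensity {α β : Type*} [MeasurableSpace α]
    [MeasurableSpace β] {μ : Measure α} {ν : Measure β} [SFinite μ] [SFinite ν]
    {ρ : α → ℝ≥0∞} {σ : β → ℝ≥0∞} (hρ : Measurable ρ) (hσ : Measurable σ)
    {f : α × β → ℝ≥0∞} (hf : Measurable f) :
    ∫⁻ x, ∫⁻ y, f (x, y) ∂(ν.withDensity σ) ∂(μ.withDensity ρ)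
      = ∫⁻ z, ρ z.1 * σ z.2 * f z ∂(μ.prod ν) := by
  rw [← lintegral_prod _ hf.aemeasurable, prod_withDensity hρ hσ,
    lintegral_withDensity_eq_lintegral_mul _ (by fun_prop) hf]
  rfl

theorem setLIntegral_lintegral_acceptance_eq {α β : Type*} [MeasurableSpace α]
    [MeasurableSpace β] {μ : Measure α} {ν : Measure β} [SFinite μ] [SFinite ν]
    {Φ : α × β → α × β} (hΦ : Measurable Φ) {U : α → ℝ} {K : β → ℝ} {H : α × β → ℝ}
    (hU : Measurable U) (hK : Measurable K) (hH : ∀ x v, H (x, v) = U x + K v)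
    {A B : Set α} (hA : MeasurableSet A) (hB : MeasurableSet B) :
    ∫⁻ x in A, ∫⁻ v, {w | (Φ (x, w)).1 ∈ B}.indicator
        (fun w => ENNReal.ofReal (min 1 (Real.exp (-H (Φ (x, w)) + H (x, w))))) v
        ∂(ν.withDensity fun v => ENNReal.ofReal (Real.exp (-K v)))
        ∂(μ.withDensity fun x => ENNReal.ofReal (Real.exp (-U x)))
      = ∫⁻ z, A.indicator 1 z.1 * B.indicator 1 (Φ z).1
          * ENNReal.ofReal (min (Real.exp (-H z)) (Real.exp (-H (Φ z)))) ∂(μ.prod ν) := by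
  have hH_meas : Measurable H := by
    rw [show H = fun z => U z.1 + K z.2 from funext fun z => hH z.1 z.2]
    fun_prop
  set a : α × β → ℝ≥0∞ := fun z => ENNReal.ofReal (min 1 (Real.exp (-H (Φ z) + H z)))
  have hf : Measurable fun z => A.indicator 1 z.1 * B.indicator 1 (Φ z).1 * a z := by
    fun_prop (disch := assumption)
  calc _ = ∫⁻ x, ∫⁻ v, A.indicator 1 x * B.indicator 1 (Φ (x, v)).1 * a (x, v)
        ∂(ν.withDensity fun v => ENNReal.ofReal (Real.exp (-K v)))
        ∂(μ.withDensity fun x => ENNReal.ofReal (Real.exp (-U x))) := by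
        rw [← lintegral_indicator hA]
        refine lintegral_congr fun x => ?_
        by_cases hx : x ∈ A
        · simp only [Set.indicator_of_mem hx, Pi.one_apply, one_mul]
          refine lintegral_congr fun v => ?_
          by_cases hv : (Φ (x, v)).1 ∈ B <;> simp [hv, a]
        · simp [hx]
    _ = _ := lintegral_lintegral_withDensity_withDensity (by fun_prop) (by fun_prop) hf
    _ = _ := by
        refine lintegral_congr fun z => ?_
        have hdens : ENNReal.ofReal (Real.exp (-U z.1)) * ENNReal.ofReal (Real.exp (-K z.2))
            = ENNReal.ofReal (Real.exp (-H z)) := by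
          rw [← ENNReal.ofReal_mul (Real.exp_nonneg _), ← Real.exp_add, ← neg_add, ← hH]
        rw [hdens, mul_comm, mul_assoc, mul_comm (a z)]
        exact congrArg _ (ENNReal.ofReal_exp_neg_mul_min_one _ _)

def DetailedBalance {E : Type*} [MeasurableSpace E] (π : Measure E) (P : E → Set E → ℝ≥0∞) :
    Prop :=
  ∀ A B : Set E, MeasurableSet A → MeasurableSet B →
    ∫⁻ x in A, P x B ∂π = ∫⁻ x in B, P x A ∂π

theorem DetailedBalance.add_rejection {E : Type*} [MeasurableSpace E] {π : Measure E}
    {Q : E → Set E → ℝ≥0∞} (hQ : DetailedBalance π Q) {r : E → ℝ≥0∞} (hr : Measurable r) :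
    DetailedBalance π fun x A => A.indicator 1 x * (1 - r x) + Q x A := by
  have hsplit : ∀ C D : Set E, MeasurableSet D →
      ∫⁻ x in C, (D.indicator 1 x * (1 - r x) + Q x D) ∂π
        = ∫⁻ x in D ∩ C, (1 - r x) ∂π + ∫⁻ x in C, Q x D ∂π := by
    intro C D hD
    have hind : ∀ x, D.indicator 1 x * (1 - r x) = D.indicator (fun x => 1 - r x) x := fun x => by
      by_cases hx : x ∈ D <;> simp [hx]
    simp only [hind]
    rw [lintegral_add_left ((hr.const_sub 1).indicator hD),
      setLIntegral_indicator hD]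
  intro A B hA hB
  rw [hsplit A B hB, hsplit B A hA, Set.inter_comm, hQ A B hA hB]

theorem stmt_6_general {E : Type*} [MeasurableSpace E] [AddCommGroup E] [MeasurableNeg E]
    (μ : Measure E) [IsProbabilityMeasure μ]
    (Φ : E × E → E × E) (hΦ_meas : Measurable Φ)
    (hΦ : FlipRev (μ.prod μ) (fun z : E × E => (z.1, -z.2)) Φ)
    (U K : E → ℝ) (hU_meas : Measurable U) (hK_meas : Measurable K)
    (hK_even : ∀ v : E, K (-v) = K v)
    (Ppi lam : Measure E)
    (hPpi : Ppi = μ.withDensity fun x => ENNReal.ofReal (Real.exp (-U x)))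
    (hlam : lam = μ.withDensity fun v => ENNReal.ofReal (Real.exp (-K v)))
    [IsProbabilityMeasure lam] :
    -- the Hamiltonian
    let H : E × E → ℝ := fun z => U z.1 + K z.2
    -- the acceptance probability
    let α : E × E → E × E → ℝ≥0∞ := fun z z' =>
      ENNReal.ofReal (min 1 (Real.exp (-H z' + H z)))
    -- the augmented Metropolis--Hastings kernel
    let P : E → Set E → ℝ≥0∞ := fun x A =>
      A.indicator (fun _ => (1:ℝ≥0∞)) x * (1 - ∫⁻ v, α (x, v) (Φ (x, v)) ∂lam)
        + ∫⁻ v, {w : E | (Φ (x, w)).1 ∈ A}.indicator (fun w => α (x, w) (Φ (x, w))) v ∂lam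
    -- `P` is a Markov kernel which is `Π`-reversible
    (∀ x : E, P x Set.univ = 1) ∧
      ∀ A B : Set E, MeasurableSet A → MeasurableSet B →
        ∫⁻ x in A, P x B ∂Ppi = ∫⁻ x in B, P x A ∂Ppi := by
  intro H α P
  have hα_meas : Measurable fun z => α z (Φ z) := by fun_prop
  refine ⟨fun x => ?_, ?_⟩
  · have hα_le : ∫⁻ v, α (x, v) (Φ (x, v)) ∂lam ≤ 1 :=
      (lintegral_mono fun _ => ENNReal.ofReal_le_one.2 (min_le_left _ _)).trans_eq
        (by simp)
    simpa [P] using tsub_add_cancel_of_le hα_le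
  subst hPpi hlam
  refine DetailedBalance.add_rejection (fun A B hA hB => ?_) hα_meas.lintegral_prod_right
  rw [setLIntegral_lintegral_acceptance_eq hΦ_meas hU_meas hK_meas (fun _ _ => rfl) hA hB,
    setLIntegral_lintegral_acceptance_eq hΦ_meas hU_meas hK_meas (fun _ _ => rfl) hB hA]
  exact hΦ.lintegral_indicator_mul_symm (by fun_prop) hΦ_meas measurable_fst (fun _ => rfl)
    (m := fun q => ENNReal.ofReal (min (Real.exp (-H q.1)) (Real.exp (-H q.2))))
    (by fun_prop) (fun _ _ => by rw [min_comm]) (fun _ _ => by simp [H, hK_even]) hA hB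

/-- The augmented Metropolis--Hastings kernel built from a `(μ⊗μ,κ)`-reversible transform
`Φ` (with `κ(x,v) = (x,-v)`) is a `Π`-reversible Markov kernel. -/
theorem stmt_6 {E : Type*} [MeasurableSpace E] [AddCommGroup E] [MeasurableNeg E]
    (μ : Measure E) [IsProbabilityMeasure μ]
    (Φ : E × E → E × E) (hΦ_meas : Measurable Φ) (hΦ_bij : Function.Bijective Φ)
    (hΦ : FlipRev (μ.prod μ) (fun z : E × E => (z.1, -z.2)) Φ)
    (U K : E → ℝ) (hU_meas : Measurable U) (hK_meas : Measurable K)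
    (hK_even : ∀ v : E, K (-v) = K v)
    (Ppi lam : Measure E)
    (hPpi : Ppi = μ.withDensity fun x => ENNReal.ofReal (Real.exp (-U x)))
    (hlam : lam = μ.withDensity fun v => ENNReal.ofReal (Real.exp (-K v)))
    [IsProbabilityMeasure Ppi] [IsProbabilityMeasure lam] :
    -- the Hamiltonian
    let H : E × E → ℝ := fun z => U z.1 + K z.2
    -- the acceptance probability
    let α : E × E → E × E → ℝ≥0∞ := fun z z' =>
      ENNReal.ofReal (min 1 (Real.exp (-H z' + H z)))
    -- the augmented Metropolis--Hastings kernel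
    let P : E → Set E → ℝ≥0∞ := fun x A =>
      A.indicator (fun _ => (1:ℝ≥0∞)) x * (1 - ∫⁻ v, α (x, v) (Φ (x, v)) ∂lam)
        + ∫⁻ v, {w : E | (Φ (x, w)).1 ∈ A}.indicator (fun w => α (x, w) (Φ (x, w))) v ∂lam
    -- `P` is a Markov kernel which is `Π`-reversible
    (∀ x : E, P x Set.univ = 1) ∧
      ∀ A B : Set E, MeasurableSet A → MeasurableSet B →
        ∫⁻ x in A, P x B ∂Ppi = ∫⁻ x in B, P x A ∂Ppi :=
  stmt_6_general μ Φ hΦ_meas hΦ U K hU_meas hK_meas hK_even Ppi lam hPpi hlam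
end

section
/- Let μ be a probability measure on (E,𝓔), where E is a measurable abelian group with measurable negation, let κ(x,v) = (x,−v) on E², and let Φ : E² → E² be a (μ⊗μ,κ)-reversible transform. Then the proposal kernel Q(x,A) = μ({w ∈ E : Φ(x,w) ∈ A×E}) is a μ-reversible Markov kernel on (E,𝓔); in particular, the augmented Metropolis kernel built from Q with acceptance probability α(x,y) = min{1, exp(−U(y)+U(x))} is Π-reversible for Π(dx) = exp(−U(x))μ(dx). -/
/-! Drawing `w ∼ μ` and moving `x` to the first coordinate of `Φ (x, w)` gives the kernel `Q`,
and `μ ⊗ₘ Q` is the image of `μ ⊗ μ` under `z ↦ (z.1, (Φ z).1)`. Testing the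
`(μ ⊗ μ, κ)`-reversibility of `Φ` on the sets `A × E`, `B × E` (fixed by `κ`, which only acts
on the second coordinate) says that this joint law gives the same mass to `A × B` and `B × A`,
i.e. `Q` is `μ`-reversible; as `μ` is finite, the joint law is then invariant under swapping
the coordinates.

For the Metropolis kernel, the rejection part contributes the integral of
`1 - ∫ α x y dQ(x, dy)` over `A ∩ B`, symmetric in `A` and `B`, and the acceptance part is the
integral over `A × B` of `e^{-U x} α x y = min (e^{-U x}) (e^{-U y})` against the joint law,
which is symmetric by the swap invariance. -/

open MeasureTheory
open scoped ENNReal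

open ProbabilityTheory Set

theorem Measurable.comp_prodMk_left {α β γ : Type*} [MeasurableSpace α] [MeasurableSpace β]
    [MeasurableSpace γ] {f : α × β → γ} (hf : Measurable f) (x : α) :
    Measurable fun w => f (x, w) :=
  hf.comp measurable_prodMk_left

namespace ProbabilityTheory.Kernel

variable {α β γ : Type*} {mα : MeasurableSpace α} {mβ : MeasurableSpace β}
  {mγ : MeasurableSpace γ}

noncomputable def ofRandomMap (μ : Measure β) [SFinite μ] (f : α × β → γ) (hf : Measurable f) :
    Kernel α γ where
  toFun x := μ.map fun w => f (x, w)
  measurable' := by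
    refine Measure.measurable_of_measurable_coe _ fun s hs => ?_
    simp_rw [Measure.map_apply (hf.comp_prodMk_left _) hs]
    exact measurable_measure_prodMk_left (hf hs)

variable {μ : Measure β} {f : α × β → γ} {hf : Measurable f}

theorem ofRandomMap_apply [SFinite μ] (x : α) : ofRandomMap μ f hf x = μ.map fun w => f (x, w) := rfl

instance [IsFiniteMeasure μ] : IsFiniteKernel (ofRandomMap μ f hf) := by
  refine ⟨⟨μ univ, measure_lt_top μ univ, fun x => ?_⟩⟩
  rw [ofRandomMap_apply, Measure.map_apply (hf.comp_prodMk_left _) .univ]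
  exact measure_mono (subset_univ _)

instance [IsProbabilityMeasure μ] : IsMarkovKernel (ofRandomMap μ f hf) :=
  ⟨fun _ => Measure.isProbabilityMeasure_map (hf.comp_prodMk_left _).aemeasurable⟩

theorem compProd_ofRandomMap [IsFiniteMeasure μ] (ν : Measure α) [SFinite ν] :
    ν ⊗ₘ ofRandomMap μ f hf = (ν.prod μ).map fun z => (z.1, f z) := by
  ext s hs
  rw [Measure.compProd_apply hs, Measure.map_apply (measurable_fst.prodMk hf) hs,
    Measure.prod_apply (measurable_fst.prodMk hf hs)]
  refine lintegral_congr fun x => ?_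
  rw [ofRandomMap_apply, Measure.map_apply (hf.comp_prodMk_left _)
    (measurable_prodMk_left hs)]
  rfl

theorem setLIntegral_ofRandomMap [IsFiniteMeasure μ] (ν : Measure α) [SFinite ν] {A : Set α}
    {B : Set γ} (hA : MeasurableSet A) (hB : MeasurableSet B) :
    ∫⁻ x in A, ofRandomMap μ f hf x B ∂ν = (ν.prod μ) (A ×ˢ univ ∩ f ⁻¹' B) := by
  rw [← Measure.compProd_apply_prod hA hB, compProd_ofRandomMap,
    Measure.map_apply (measurable_fst.prodMk hf) (hA.prod hB)]
  congr 1
  ext z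
  simp

theorem isReversible_ofRandomMap_of_flipRev [IsFiniteMeasure μ] (ν : Measure α) [SFinite ν]
    {Φ : α × β → α × β} (hΦ : Measurable Φ) {κ : α × β → α × β}
    (h : FlipRev (ν.prod μ) κ Φ) (hκ : ∀ z, (κ z).1 = z.1) :
    IsReversible (ofRandomMap μ (fun z => (Φ z).1) hΦ.fst) ν := by
  intro A B hA hB
  have hpre : ∀ S : Set α, (κ ∘ Φ) ⁻¹' (S ×ˢ univ) = (fun z => (Φ z).1) ⁻¹' S := by
    intro S; ext z; simp [hκ]
  rw [setLIntegral_ofRandomMap ν hA hB, setLIntegral_ofRandomMap ν hB hA, ← hpre, ← hpre]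
  exact h _ _ (hA.prod .univ) (hB.prod .univ)

theorem IsReversible.measurePreserving_swap_compProd {κ : Kernel α α} [IsFiniteKernel κ]
    {ν : Measure α} [IsFiniteMeasure ν] (h : IsReversible κ ν) :
    MeasurePreserving Prod.swap (ν ⊗ₘ κ) (ν ⊗ₘ κ) := by
  refine ⟨measurable_swap, Measure.ext_prod fun hA hB => ?_⟩
  rw [Measure.map_apply measurable_swap (hA.prod hB), preimage_swap_prod,
    Measure.compProd_apply_prod hB hA, Measure.compProd_apply_prod hA hB, h hB hA]

end ProbabilityTheory.Kernel

theorem MeasureTheory.MeasurePreserving.setLIntegral_prod_comm {α : Type*} [MeasurableSpace α]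
    {ν : Measure (α × α)} (hν : MeasurePreserving Prod.swap ν ν) {g : α × α → ℝ≥0∞}
    (hg : ∀ z, g z.swap = g z) (s t : Set α) :
    ∫⁻ z in s ×ˢ t, g z ∂ν = ∫⁻ z in t ×ˢ s, g z ∂ν := by
  rw [← hν.setLIntegral_comp_preimage_emb MeasurableEquiv.prodComm.measurableEmbedding]
  simp [hg]

namespace ProbabilityTheory.Kernel

variable {α : Type*} {mα : MeasurableSpace α}

noncomputable def metropolis (κ : Kernel α α) (a : α → α → ℝ≥0∞) (x : α) (A : Set α) : ℝ≥0∞ :=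
  A.indicator (fun _ => 1) x * (1 - ∫⁻ y, a x y ∂κ x) + ∫⁻ y in A, a x y ∂κ x

variable {κ : Kernel α α} [IsSFiniteKernel κ] {a : α → α → ℝ≥0∞} {A B : Set α}

theorem setLIntegral_metropolis (ha : Measurable (Function.uncurry a)) (π : Measure α)
    (hB : MeasurableSet B) :
    ∫⁻ x in A, metropolis κ a x B ∂π =
      ∫⁻ x in A ∩ B, (1 - ∫⁻ y, a x y ∂κ x) ∂π + ∫⁻ x in A, ∫⁻ y in B, a x y ∂κ x ∂π := by
  simp only [metropolis]
  rw [lintegral_add_left (f := fun x => B.indicator (fun _ => 1) x * (1 - ∫⁻ y, a x y ∂κ x))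
    ((measurable_const.indicator hB).mul (measurable_const.sub ha.lintegral_kernel_prod_right)),
    inter_comm, ← Measure.restrict_restrict hB, ← lintegral_indicator hB]
  congr 2 with x
  by_cases hx : x ∈ B <;> simp [hx]

theorem setLIntegral_setLIntegral_withDensity_eq_compProd (μ : Measure α) [SFinite μ]
    {e : α → ℝ≥0∞} (he : Measurable e) (ha : Measurable (Function.uncurry a)) (hA : MeasurableSet A)
    (hB : MeasurableSet B) :
    ∫⁻ x in A, ∫⁻ y in B, a x y ∂κ x ∂(μ.withDensity e) =
      ∫⁻ z in A ×ˢ B, e z.1 * a z.1 z.2 ∂(μ ⊗ₘ κ) := by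
  rw [setLIntegral_withDensity_eq_setLIntegral_mul _ he
    (ha.setLIntegral_kernel_prod_right hB) hA, Measure.setLIntegral_compProd
    (f := fun z => e z.1 * a z.1 z.2) ((he.comp measurable_fst).mul ha) hA hB]
  refine setLIntegral_congr_fun hA fun x _ => ?_
  exact (lintegral_const_mul _ (ha.comp_prodMk_left x)).symm

theorem setLIntegral_metropolis_comm [IsFiniteKernel κ] {μ : Measure α} [IsFiniteMeasure μ]
    (hκ : IsReversible κ μ) {e : α → ℝ≥0∞} (he : Measurable e)
    (ha : Measurable (Function.uncurry a)) (h_balance : ∀ x y, e x * a x y = e y * a y x)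
    (hA : MeasurableSet A) (hB : MeasurableSet B) :
    ∫⁻ x in A, metropolis κ a x B ∂(μ.withDensity e) =
      ∫⁻ x in B, metropolis κ a x A ∂(μ.withDensity e) := by
  rw [setLIntegral_metropolis ha _ hB, setLIntegral_metropolis ha _ hA,
    setLIntegral_setLIntegral_withDensity_eq_compProd μ he ha hA hB,
    setLIntegral_setLIntegral_withDensity_eq_compProd μ he ha hB hA,
    hκ.measurePreserving_swap_compProd.setLIntegral_prod_comm (fun z => h_balance z.2 z.1),
    inter_comm]

end ProbabilityTheory.Kernel

theorem ENNReal.ofReal_exp_neg_mul_ofReal_min_one_exp (u v : ℝ) :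
    ENNReal.ofReal (Real.exp (-u)) * ENNReal.ofReal (min 1 (Real.exp (-v + u))) =
      ENNReal.ofReal (min (Real.exp (-u)) (Real.exp (-v))) := by
  rw [← ENNReal.ofReal_mul (Real.exp_pos _).le, mul_min_of_nonneg _ _ (Real.exp_pos _).le,
    mul_one, ← Real.exp_add, add_comm (-v), neg_add_cancel_left]

theorem stmt_7_general {E : Type*} [MeasurableSpace E] [AddCommGroup E]
    (μ : Measure E) [IsProbabilityMeasure μ]
    (Φ : E × E → E × E) (hΦ_meas : Measurable Φ)
    (hΦ : FlipRev (μ.prod μ) (fun z : E × E => (z.1, -z.2)) Φ)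
    (U : E → ℝ) (hU_meas : Measurable U)
    (Ppi : Measure E)
    (hPpi : Ppi = μ.withDensity fun x => ENNReal.ofReal (Real.exp (-U x))) :
    -- the proposal kernel, as the law of `p_X(Φ(x,·))` under `μ`
    let Q : E → Measure E := fun x => μ.map fun w => (Φ (x, w)).1
    -- the acceptance probability
    let α : E → E → ℝ≥0∞ := fun x y => ENNReal.ofReal (min 1 (Real.exp (-U y + U x)))
    -- the augmented Metropolis kernel
    let P : E → Set E → ℝ≥0∞ := fun x A =>
      A.indicator (fun _ => (1:ℝ≥0∞)) x * (1 - ∫⁻ y, α x y ∂(Q x))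
        + ∫⁻ y in A, α x y ∂(Q x)
    -- `Q` is a `μ`-reversible Markov kernel
    ((∀ x : E, Q x Set.univ = 1) ∧
      ∀ A B : Set E, MeasurableSet A → MeasurableSet B →
        ∫⁻ x in A, Q x B ∂μ = ∫⁻ x in B, Q x A ∂μ) ∧
    -- and the augmented Metropolis kernel is `Π`-reversible
    (∀ A B : Set E, MeasurableSet A → MeasurableSet B →
        ∫⁻ x in A, P x B ∂Ppi = ∫⁻ x in B, P x A ∂Ppi) := by
  intro Q α P
  let K := Kernel.ofRandomMap μ (fun z => (Φ z).1) hΦ_meas.fst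
  have hK : Kernel.IsReversible K μ :=
    Kernel.isReversible_ofRandomMap_of_flipRev μ hΦ_meas hΦ fun _ => rfl
  refine ⟨⟨fun x => measure_univ (μ := K x), fun A B hA hB => hK hA hB⟩, fun A B hA hB => ?_⟩
  have he : Measurable fun x => ENNReal.ofReal (Real.exp (-U x)) := by fun_prop
  have hα : Measurable (Function.uncurry α) := by unfold α; fun_prop
  have h_balance : ∀ x y, ENNReal.ofReal (Real.exp (-U x)) * α x y =
      ENNReal.ofReal (Real.exp (-U y)) * α y x := fun x y => by
    simp only [α, ENNReal.ofReal_exp_neg_mul_ofReal_min_one_exp, min_comm]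
  subst hPpi
  exact Kernel.setLIntegral_metropolis_comm hK he hα h_balance hA hB

/-- The proposal kernel `Q(x,A) = μ({w : Φ(x,w) ∈ A×E})` of the augmented Metropolis kernel
is `μ`-reversible, and the resulting augmented Metropolis kernel is `Π`-reversible. -/
theorem stmt_7 {E : Type*} [MeasurableSpace E] [AddCommGroup E] [MeasurableNeg E]
    (μ : Measure E) [IsProbabilityMeasure μ]
    (Φ : E × E → E × E) (hΦ_meas : Measurable Φ) (hΦ_bij : Function.Bijective Φ)
    (hΦ : FlipRev (μ.prod μ) (fun z : E × E => (z.1, -z.2)) Φ)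
    (U : E → ℝ) (hU_meas : Measurable U)
    (Ppi : Measure E)
    (hPpi : Ppi = μ.withDensity fun x => ENNReal.ofReal (Real.exp (-U x)))
    [IsProbabilityMeasure Ppi] :
    -- the proposal kernel, as the law of `p_X(Φ(x,·))` under `μ`
    let Q : E → Measure E := fun x => μ.map fun w => (Φ (x, w)).1
    -- the acceptance probability
    let α : E → E → ℝ≥0∞ := fun x y => ENNReal.ofReal (min 1 (Real.exp (-U y + U x)))
    -- the augmented Metropolis kernel
    let P : E → Set E → ℝ≥0∞ := fun x A =>
      A.indicator (fun _ => (1:ℝ≥0∞)) x * (1 - ∫⁻ y, α x y ∂(Q x))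
        + ∫⁻ y in A, α x y ∂(Q x)
    -- `Q` is a `μ`-reversible Markov kernel
    ((∀ x : E, Q x Set.univ = 1) ∧
      ∀ A B : Set E, MeasurableSet A → MeasurableSet B →
        ∫⁻ x in A, Q x B ∂μ = ∫⁻ x in B, Q x A ∂μ) ∧
    -- and the augmented Metropolis kernel is `Π`-reversible
    (∀ A B : Set E, MeasurableSet A → MeasurableSet B →
        ∫⁻ x in A, P x B ∂Ppi = ∫⁻ x in B, P x A ∂Ppi) :=
  stmt_7_general μ Φ hΦ_meas hΦ U hU_meas Ppi hPpi
end

section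
/- Fix d ∈ ℕ, h ∈ ℝ, and let κ(x,v) = (x,−v) on ℝ^d × ℝ^d. Let ξ : ℝ^d → ℝ^d be a Borel-measurable vector field, and let φ_h = Φ_circle ∘ Φ_bounce ∘ Φ_circle be the Weave transform. Then |φ_h(z)| = |z| for all z ∈ ℝ^{2d} and, for every g > 0, φ_h is (μ_g⊗μ_g, κ)-reversible, where μ_g = 𝒩_d(0, g⁻¹I_d); moreover φ_h is (Leb,κ)-reversible for Lebesgue measure on ℝ^{2d}. -/
open MeasureTheory
open scoped ENNReal RealInnerProductSpace

/-- The flip `κ(x,v) = (x,-v)` on `ℝ^d × ℝ^d`. -/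
def flipT (d : ℕ) (z : EuclideanSpace ℝ (Fin d) × EuclideanSpace ℝ (Fin d)) :
    EuclideanSpace ℝ (Fin d) × EuclideanSpace ℝ (Fin d) :=
  (z.1, -z.2)

/-- The circle transform with angle `h` on `ℝ^d × ℝ^d`. -/
noncomputable def circleT (d : ℕ) (h : ℝ)
    (z : EuclideanSpace ℝ (Fin d) × EuclideanSpace ℝ (Fin d)) :
    EuclideanSpace ℝ (Fin d) × EuclideanSpace ℝ (Fin d) :=
  (Real.cos h • z.1 + Real.sin h • z.2, -(Real.sin h) • z.1 + Real.cos h • z.2)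

/-- The normalized vector field `ξ̄(x) = ξ(x)/|ξ(x)|` (junk value `0` on `𝒩 = {ξ = 0}`). -/
noncomputable def xibar (d : ℕ) (ξ : EuclideanSpace ℝ (Fin d) → EuclideanSpace ℝ (Fin d))
    (x : EuclideanSpace ℝ (Fin d)) : EuclideanSpace ℝ (Fin d) :=
  ‖ξ x‖⁻¹ • ξ x

open Classical in
/-- The reflection `R(x)v = v − 2(ξ̄(x)ᵀv)ξ̄(x)` for `x ∉ 𝒩`, and `R(x)v = −v` for `x ∈ 𝒩`. -/
noncomputable def reflT (d : ℕ) (ξ : EuclideanSpace ℝ (Fin d) → EuclideanSpace ℝ (Fin d))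
    (x v : EuclideanSpace ℝ (Fin d)) : EuclideanSpace ℝ (Fin d) :=
  if ξ x = 0 then -v else v - (2 * ⟪xibar d ξ x, v⟫) • xibar d ξ x

/-- The bounce transform `Φ_bounce(x,v) = (x, R(x)v)`. -/
noncomputable def bounceT (d : ℕ) (ξ : EuclideanSpace ℝ (Fin d) → EuclideanSpace ℝ (Fin d))
    (z : EuclideanSpace ℝ (Fin d) × EuclideanSpace ℝ (Fin d)) :
    EuclideanSpace ℝ (Fin d) × EuclideanSpace ℝ (Fin d) :=
  (z.1, reflT d ξ z.1 z.2)

/-- The centered Gaussian measure `𝒩_d(0, σ²·I_d)` on `ℝ^d`, realized as the `d`-fold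
product of the one-dimensional Gaussian with mean `0` and variance `σ²`. -/
noncomputable def gaussd (d : ℕ) (v : NNReal) : Measure (EuclideanSpace ℝ (Fin d)) :=
  Measure.map (MeasurableEquiv.toLp 2 (Fin d → ℝ))
    (Measure.pi fun _ : Fin d => ProbabilityTheory.gaussianReal 0 v)

open Function ProbabilityTheory
open scoped NNReal

/-! Write `κ` for the flip. The maps `κ ∘ Φ_circle` and `κ ∘ Φ_bounce` are involutions, and
then so is `T = κ ∘ φ_h` since `φ_h` is a palindromic composition of the two. A measurable
involution preserving a measure `μ` is `μ`-reversible, so it suffices that `T` preserves both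
measures. For Lebesgue measure: `Φ_circle` is a rotation of `ℝ^d × ℝ^d`, `Φ_bounce` is a skew
product whose fibre maps are reflections, and `κ` is a reflection. Every factor also preserves
`|z|²`, and the density of `μ_g ⊗ μ_g` with respect to Lebesgue measure is a function of `|z|²`. -/

theorem Function.Involutive.comp_palindrome {α : Type*} {κ A B : α → α} (hκ : Involutive κ)
    (hA : Involutive (κ ∘ A)) (hB : Involutive (κ ∘ B)) : Involutive (κ ∘ A ∘ B ∘ A) := by
  have conj {F : α → α} (hF : Involutive (κ ∘ F)) (y : α) : F (κ (F y)) = κ y := by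
    simpa only [comp_apply, hκ _] using congrArg κ (hF y)
  intro z
  simp only [comp_apply, conj hA, conj hB]
  exact hκ z

section General

variable {α β : Type*} [MeasurableSpace α] [MeasurableSpace β]

theorem Function.Involutive.measRev {μ : Measure α} {T : α → α} (hT : Involutive T)
    (hμ : MeasurePreserving T μ μ) : MeasRev μ T := by
  intro A B hA hB
  have hpre : A ∩ T ⁻¹' B = T ⁻¹' (B ∩ T ⁻¹' A) := by
    ext z
    simp only [Set.mem_inter_iff, Set.mem_preimage, hT z]
    tauto
  rw [hpre, hμ.measure_preimage (hB.inter (hA.preimage hμ.measurable)).nullMeasurableSet]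

theorem MeasureTheory.MeasurePreserving.withDensity_of_comp_eq {μ : Measure α} {ν : Measure β}
    {T : α → β} (hT : MeasurePreserving T μ ν) (he : MeasurableEmbedding T) {f : β → ℝ≥0∞}
    {g : α → ℝ≥0∞} (hfg : f ∘ T = g) :
    MeasurePreserving T (μ.withDensity g) (ν.withDensity f) := by
  refine ⟨hT.measurable, Measure.ext fun s hs => ?_⟩
  rw [Measure.map_apply hT.measurable hs, withDensity_apply _ (hT.measurable hs),
    withDensity_apply _ hs, ← hfg]
  exact hT.setLIntegral_comp_preimage_emb he f s

theorem MeasureTheory.Measure.pi_fin_withDensity (μ : Measure α) [SigmaFinite μ] {f : α → ℝ≥0∞}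
    (hf : Measurable f) [SigmaFinite (μ.withDensity f)] (n : ℕ) :
    Measure.pi (fun _ : Fin n => μ.withDensity f)
      = (Measure.pi fun _ : Fin n => μ).withDensity (fun x => ∏ i, f (x i)) := by
  induction n with
  | zero =>
    simp only [Finset.univ_eq_empty, Finset.prod_empty, ← Pi.one_def, withDensity_one]
    rw [Measure.pi_of_empty, Measure.pi_of_empty]
  | succ n ih =>
    have hF : Measurable fun x : Fin n → α => ∏ i, f (x i) := by fun_prop
    have : SigmaFinite ((Measure.pi fun _ : Fin n => μ).withDensity fun x => ∏ i, f (x i)) := by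
      rw [← ih]; infer_instance
    set e := MeasurableEquiv.piFinSuccAbove (fun _ : Fin (n + 1) => α) 0
    have he : MeasurePreserving e (Measure.pi fun _ => μ)
        (μ.prod (Measure.pi fun _ : Fin n => μ)) := measurePreserving_piFinSuccAbove _ 0
    have hsplit : (fun p : α × (Fin n → α) => f p.1 * ∏ i, f (p.2 i)) ∘ e
        = fun x : Fin (n + 1) → α => ∏ i, f (x i) := by
      funext x
      exact (Fin.prod_univ_succAbove (fun i => f (x i)) 0).symm
    rw [← (measurePreserving_piFinSuccAbove (fun _ => μ.withDensity f) 0).symm.map_eq, ih,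
      prod_withDensity hf hF, ← (he.withDensity_of_comp_eq e.measurableEmbedding hsplit).map_eq,
      Measure.map_map e.symm.measurable e.measurable, e.symm_comp_self, Measure.map_id]

theorem LinearMap.measurePreserving_of_norm_sq_add {U V : Type*}
    [NormedAddCommGroup U] [InnerProductSpace ℝ U] [FiniteDimensional ℝ U]
    [MeasurableSpace U] [BorelSpace U]
    [NormedAddCommGroup V] [InnerProductSpace ℝ V] [FiniteDimensional ℝ V]
    [MeasurableSpace V] [BorelSpace V]
    (f : U × V →ₗ[ℝ] U × V) (hf : ∀ z, ‖(f z).1‖ ^ 2 + ‖(f z).2‖ ^ 2 = ‖z.1‖ ^ 2 + ‖z.2‖ ^ 2) :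
    MeasurePreserving f := by
  -- `U × V` carries the sup norm; `f` is an isometry for the `L²` norm of `WithLp 2 (U × V)`.
  let e := WithLp.linearEquiv 2 ℝ (U × V)
  let g : WithLp 2 (U × V) →ₗᵢ[ℝ] WithLp 2 (U × V) :=
    { toLinearMap := e.symm.toLinearMap ∘ₗ f ∘ₗ e.toLinearMap
      norm_map' := fun w => by
        rw [← sq_eq_sq₀ (norm_nonneg _) (norm_nonneg _), WithLp.prod_norm_sq_eq_of_L2,
          WithLp.prod_norm_sq_eq_of_L2]
        exact hf _ }
  have hfg : ⇑f = WithLp.ofLp ∘ g.toLinearIsometryEquiv rfl ∘ WithLp.toLp 2 := rfl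
  rw [hfg]
  exact (WithLp.volume_preserving_ofLp U V).comp
    ((LinearIsometryEquiv.measurePreserving _).comp (WithLp.volume_preserving_toLp U V))

end General

section Gaussian

variable {d : ℕ} {v : ℝ≥0}

theorem prod_gaussianPDFReal (x : EuclideanSpace ℝ (Fin d)) :
    ∏ i, gaussianPDFReal 0 v (x i)
      = (Real.sqrt (2 * Real.pi * v))⁻¹ ^ d * Real.exp (-‖x‖ ^ 2 / (2 * v)) := by
  simp only [gaussianPDFReal, sub_zero, Finset.prod_mul_distrib, Finset.prod_const,
    Finset.card_univ, Fintype.card_fin, ← Real.exp_sum, EuclideanSpace.real_norm_sq_eq,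
    neg_div, Finset.sum_neg_distrib, Finset.sum_div]

theorem gaussd_eq_withDensity (hv : v ≠ 0) :
    gaussd d v = volume.withDensity fun x =>
      ENNReal.ofReal ((Real.sqrt (2 * Real.pi * v))⁻¹ ^ d * Real.exp (-‖x‖ ^ 2 / (2 * v))) := by
  have hpi : Measure.pi (fun _ : Fin d => gaussianReal 0 v)
      = (Measure.pi fun _ : Fin d => (volume : Measure ℝ)).withDensity
          (fun y => ∏ i, gaussianPDF 0 v (y i)) := by
    have : SigmaFinite ((volume : Measure ℝ).withDensity (gaussianPDF 0 v)) := by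
      rw [← gaussianReal_of_var_ne_zero 0 hv]; infer_instance
    simp only [gaussianReal_of_var_ne_zero 0 hv]
    exact Measure.pi_fin_withDensity _ (measurable_gaussianPDF 0 v) d
  have hdens : (fun x : EuclideanSpace ℝ (Fin d) =>
      ENNReal.ofReal ((Real.sqrt (2 * Real.pi * v))⁻¹ ^ d * Real.exp (-‖x‖ ^ 2 / (2 * v))))
        ∘ WithLp.toLp 2 = fun y => ∏ i, gaussianPDF 0 v (y i) := by
    funext y
    rw [comp_apply, ← prod_gaussianPDFReal, ENNReal.ofReal_prod_of_nonneg
      fun i _ => gaussianPDFReal_nonneg 0 v _]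
    rfl
  rw [gaussd, hpi]
  exact ((PiLp.volume_preserving_toLp (Fin d)).withDensity_of_comp_eq
    (MeasurableEquiv.toLp 2 (Fin d → ℝ)).measurableEmbedding hdens).map_eq

theorem gaussd_prod_eq_withDensity (hv : v ≠ 0) :
    (gaussd d v).prod (gaussd d v) = volume.withDensity fun z =>
      ENNReal.ofReal (((Real.sqrt (2 * Real.pi * v))⁻¹ ^ d) ^ 2
        * Real.exp (-(‖z.1‖ ^ 2 + ‖z.2‖ ^ 2) / (2 * v))) := by
  have hρ : Measurable fun x : EuclideanSpace ℝ (Fin d) =>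
      ENNReal.ofReal ((Real.sqrt (2 * Real.pi * v))⁻¹ ^ d * Real.exp (-‖x‖ ^ 2 / (2 * v))) := by
    fun_prop
  rw [gaussd_eq_withDensity hv, prod_withDensity hρ hρ, ← Measure.volume_eq_prod]
  congr 1
  funext z
  rw [← ENNReal.ofReal_mul (by positivity), neg_add, add_div, Real.exp_add]
  congr 1
  ring

theorem measurePreserving_gaussd_prod (hv : v ≠ 0)
    {T : EuclideanSpace ℝ (Fin d) × EuclideanSpace ℝ (Fin d) →
      EuclideanSpace ℝ (Fin d) × EuclideanSpace ℝ (Fin d)}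
    (hT : MeasurePreserving T) (he : MeasurableEmbedding T)
    (hE : ∀ z, ‖(T z).1‖ ^ 2 + ‖(T z).2‖ ^ 2 = ‖z.1‖ ^ 2 + ‖z.2‖ ^ 2) :
    MeasurePreserving T ((gaussd d v).prod (gaussd d v)) ((gaussd d v).prod (gaussd d v)) := by
  rw [gaussd_prod_eq_withDensity hv]
  exact hT.withDensity_of_comp_eq he (funext fun z => by simp only [comp_apply, hE])

end Gaussian

section Reflection

variable {d : ℕ} {ξ : EuclideanSpace ℝ (Fin d) → EuclideanSpace ℝ (Fin d)}

open Submodule in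
theorem reflT_eq_reflection (x : EuclideanSpace ℝ (Fin d)) :
    reflT d ξ x = reflection (if ξ x = 0 then ⊥ else (ℝ ∙ xibar d ξ x)ᗮ) := by
  funext v
  by_cases hx : ξ x = 0
  · simp [reflT, hx]
  · have hu : ‖xibar d ξ x‖ = 1 := by
      rw [xibar, norm_smul, norm_inv, norm_norm, inv_mul_cancel₀ (norm_ne_zero_iff.2 hx)]
    simp only [reflT, hx, if_false]
    rw [reflection_orthogonal_apply, reflection_apply, starProjection_unit_singleton ℝ hu]
    module

theorem measurable_uncurry_reflT (hξ : Measurable ξ) : Measurable (uncurry (reflT d ξ)) := by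
  have hxb : Measurable (xibar d ξ) := hξ.norm.inv.smul hξ
  have hinner : Measurable fun p : EuclideanSpace ℝ (Fin d) × EuclideanSpace ℝ (Fin d) =>
      ⟪xibar d ξ p.1, p.2⟫ := (hxb.comp measurable_fst).inner measurable_snd
  exact Measurable.ite ((hξ.comp measurable_fst) (measurableSet_singleton 0)) measurable_snd.neg
    (measurable_snd.sub ((hinner.const_mul 2).smul (hxb.comp measurable_fst)))

end Reflection

section Weave

variable {d : ℕ} {h : ℝ} {ξ : EuclideanSpace ℝ (Fin d) → EuclideanSpace ℝ (Fin d)}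

theorem norm_sq_circleT (z : EuclideanSpace ℝ (Fin d) × EuclideanSpace ℝ (Fin d)) :
    ‖(circleT d h z).1‖ ^ 2 + ‖(circleT d h z).2‖ ^ 2 = ‖z.1‖ ^ 2 + ‖z.2‖ ^ 2 := by
  simp only [circleT, norm_add_sq_real, norm_smul, real_inner_smul_left, real_inner_smul_right,
    Real.norm_eq_abs, mul_pow, sq_abs]
  linear_combination (‖z.1‖ ^ 2 + ‖z.2‖ ^ 2) * Real.sin_sq_add_cos_sq h

theorem norm_sq_bounceT (z : EuclideanSpace ℝ (Fin d) × EuclideanSpace ℝ (Fin d)) :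
    ‖(bounceT d ξ z).1‖ ^ 2 + ‖(bounceT d ξ z).2‖ ^ 2 = ‖z.1‖ ^ 2 + ‖z.2‖ ^ 2 := by
  simp only [bounceT, reflT_eq_reflection, LinearIsometryEquiv.norm_map]

theorem involutive_flipT : Involutive (flipT d) := fun z => by
  simp [flipT]

theorem involutive_flipT_comp_circleT : Involutive (flipT d ∘ circleT d h) := fun z => by
  have hsc := Real.sin_sq_add_cos_sq h
  refine Prod.ext ?_ ?_
  · simp only [comp_apply, flipT, circleT]
    linear_combination (norm := module) hsc • z.1
  · simp only [comp_apply, flipT, circleT]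
    linear_combination (norm := module) hsc • z.2

theorem involutive_flipT_comp_bounceT : Involutive (flipT d ∘ bounceT d ξ) := fun z => by
  simp [flipT, bounceT, reflT_eq_reflection]

theorem measurePreserving_circleT : MeasurePreserving (circleT d h) := by
  let E := EuclideanSpace ℝ (Fin d)
  let C : E × E →ₗ[ℝ] E × E :=
    (Real.cos h • LinearMap.fst ℝ E E + Real.sin h • LinearMap.snd ℝ E E).prod
      (-Real.sin h • LinearMap.fst ℝ E E + Real.cos h • LinearMap.snd ℝ E E)
  exact C.measurePreserving_of_norm_sq_add norm_sq_circleT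

theorem measurePreserving_bounceT (hξ : Measurable ξ) : MeasurePreserving (bounceT d ξ) := by
  rw [Measure.volume_eq_prod]
  refine (MeasurePreserving.id volume).skew_product (measurable_uncurry_reflT hξ)
    (Filter.Eventually.of_forall fun x => ?_)
  rw [reflT_eq_reflection]
  exact (LinearIsometryEquiv.measurePreserving _).map_eq

theorem measurePreserving_flipT : MeasurePreserving (flipT d) := by
  rw [Measure.volume_eq_prod]
  exact (MeasurePreserving.id volume).prod (Measure.measurePreserving_neg volume)

end Weave

/-- The Weave transform `φ_h = Φ_circle ∘ Φ_bounce ∘ Φ_circle` preserves the Euclidean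
norm of `z = (x,v)` and is `(μ_g⊗μ_g,κ)`-reversible for `μ_g = 𝒩_d(0, g⁻¹I_d)` for every
`g > 0`, as well as `(Leb,κ)`-reversible. -/
theorem stmt_11 (d : ℕ) (h : ℝ)
    (ξ : EuclideanSpace ℝ (Fin d) → EuclideanSpace ℝ (Fin d)) (hξ_meas : Measurable ξ) :
    -- the Weave transform
    let φ := circleT d h ∘ bounceT d ξ ∘ circleT d h
    -- norm preservation: `|φ_h(z)| = |z|`
    (∀ z : EuclideanSpace ℝ (Fin d) × EuclideanSpace ℝ (Fin d),
      ‖(φ z).1‖ ^ 2 + ‖(φ z).2‖ ^ 2 = ‖z.1‖ ^ 2 + ‖z.2‖ ^ 2) ∧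
    -- `(μ_g ⊗ μ_g, κ)`-reversibility for every `g > 0`
    (∀ g : NNReal, 0 < g →
      FlipRev ((gaussd d g⁻¹).prod (gaussd d g⁻¹)) (flipT d) φ) ∧
    -- `(Leb, κ)`-reversibility
    FlipRev (volume : Measure (EuclideanSpace ℝ (Fin d) × EuclideanSpace ℝ (Fin d)))
      (flipT d) φ := by
  intro φ
  have hnorm (z : EuclideanSpace ℝ (Fin d) × EuclideanSpace ℝ (Fin d)) :
      ‖(φ z).1‖ ^ 2 + ‖(φ z).2‖ ^ 2 = ‖z.1‖ ^ 2 + ‖z.2‖ ^ 2 := by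
    simp only [φ, comp_apply, norm_sq_circleT, norm_sq_bounceT]
  have hinv : Involutive (flipT d ∘ φ) :=
    involutive_flipT.comp_palindrome involutive_flipT_comp_circleT involutive_flipT_comp_bounceT
  have hvol : MeasurePreserving (flipT d ∘ φ) :=
    measurePreserving_flipT.comp <| measurePreserving_circleT.comp <|
      (measurePreserving_bounceT hξ_meas).comp measurePreserving_circleT
  refine ⟨hnorm, fun g hg => hinv.measRev ?_, hinv.measRev hvol⟩
  refine measurePreserving_gaussd_prod (inv_ne_zero hg.ne') hvol
    (MeasurableEquiv.ofInvolutive _ hinv hvol.measurable).measurableEmbedding fun z => ?_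
  simpa only [comp_apply, flipT, norm_neg] using hnorm z
end

section
/- Let U : ℝ^d → ℝ be differentiable with gradient ξ = ∇U continuously differentiable, and let r > 0 and h > 0. For every z = (x,v) ∈ ℝ^d × ℝ^d with |z| ≤ r, the Weave transform φ_h = Φ_circle ∘ Φ_bounce ∘ Φ_circle (circle transforms with angle h) satisfies |U(p_X(φ_h(z))) − U(x)| ≤ h²·C(r), where p_X(x,v) = x and C(r) = r·sup_{|y|≤r}|ξ(y)| + r²·sup_{|y|≤r}|∂ξ(y)|, with |∂ξ(y)| the operator norm of the Jacobian matrix of ξ at y. -/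
open MeasureTheory
open scoped ENNReal RealInnerProductSpace

open Real Set

theorem norm_sub_sub_smul_le_of_norm_deriv2_le {E : Type*} [NormedAddCommGroup E]
    [NormedSpace ℝ E] {F F' F'' : ℝ → E} {K : ℝ} (hF : ∀ t, HasDerivAt F (F' t) t)
    (hF' : ∀ t, HasDerivAt F' (F'' t) t) (hK : ∀ t, ‖F'' t‖ ≤ K) (h : ℝ) :
    ‖F h - F 0 - h • F' 0‖ ≤ K * h ^ 2 / 2 := by
  wlog hh : 0 ≤ h generalizing F F' F'' h
  · have key := this (F := fun t => F (-t)) (F' := fun t => -F' (-t)) (F'' := fun t => F'' (-t))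
      (fun t => ((hF (-t)).scomp t (hasDerivAt_neg t)).congr_deriv (neg_one_smul ℝ _))
      (fun t => ((hF' (-t)).scomp t (hasDerivAt_neg t)).neg.congr_deriv (by simp))
      (fun t => hK (-t)) (-h) (by linarith)
    simpa using key
  have hLip : ∀ t, ‖F' t - F' 0‖ ≤ K * |t| := fun t => by
    simpa [Real.norm_eq_abs] using convex_univ.norm_image_sub_le_of_norm_hasDerivWithin_le
      (fun s _ => (hF' s).hasDerivWithinAt) (fun s _ => hK s) (mem_univ 0) (mem_univ t)
  have hG : ∀ t, HasDerivAt (fun t => F t - F 0 - t • F' 0) (F' t - F' 0) t := fun t =>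
    (((hF t).sub_const (F 0)).sub ((hasDerivAt_id t).smul_const (F' 0))).congr_deriv (by simp)
  have hB : ∀ t, HasDerivAt (fun t => K * t ^ 2 / 2) (K * t) t := fun t =>
    (((hasDerivAt_pow 2 t).const_mul K).div_const 2).congr_deriv (by ring)
  refine image_norm_le_of_norm_deriv_right_le_deriv_boundary
    (f := fun t => F t - F 0 - t • F' 0) (B := fun t => K * t ^ 2 / 2)
    (fun t _ => (hG t).continuousAt.continuousWithinAt) (fun t _ => (hG t).hasDerivWithinAt)
    (by simp) hB (fun t ht => ?_) ⟨hh, le_rfl⟩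
  simpa [abs_of_nonneg ht.1] using hLip t

section CircleArc

variable {E : Type*} [NormedAddCommGroup E] [InnerProductSpace ℝ E]

noncomputable def circleArc (a b : E) (t : ℝ) : E := cos t • a + sin t • b

theorem hasDerivAt_circleArc (a b : E) (t : ℝ) :
    HasDerivAt (circleArc a b) (circleArc b (-a) t) t :=
  (((hasDerivAt_cos t).smul_const a).add ((hasDerivAt_sin t).smul_const b)).congr_deriv
    (by simp only [circleArc, smul_neg, neg_smul]; abel)

theorem circleArc_zero (a b : E) : circleArc a b 0 = a := by simp [circleArc]

theorem circleArc_neg_neg (a b : E) (t : ℝ) : circleArc (-a) (-b) t = -circleArc a b t := by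
  simp only [circleArc, smul_neg, neg_add]

theorem norm_sq_circleArc_add_norm_sq_circleArc (a b : E) (t : ℝ) :
    ‖circleArc a b t‖ ^ 2 + ‖circleArc b (-a) t‖ ^ 2 = ‖a‖ ^ 2 + ‖b‖ ^ 2 := by
  simp only [circleArc, norm_add_sq_real, norm_smul, real_inner_smul_left, real_inner_smul_right,
    inner_neg_right, norm_neg, real_inner_comm a b, mul_pow, Real.norm_eq_abs, sq_abs]
  linear_combination (‖a‖ ^ 2 + ‖b‖ ^ 2) * sin_sq_add_cos_sq t

theorem circleArc_circleArc_neg (a b : E) (t : ℝ) :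
    circleArc (circleArc a b t) (-circleArc b (-a) t) t = a := by
  simp only [circleArc, smul_add, smul_neg, neg_add, neg_neg, smul_smul]
  match_scalars
  · linear_combination sin_sq_add_cos_sq t
  · ring

theorem abs_inner_neg_add_inner_fderiv_le {ξ : E → E} {r M₁ M₂ : ℝ} (hr : 0 ≤ r)
    (hM₁ : ∀ y : E, ‖y‖ ≤ r → ‖ξ y‖ ≤ M₁) (hM₂ : ∀ y : E, ‖y‖ ≤ r → ‖fderiv ℝ ξ y‖ ≤ M₂)
    {x v : E} (hxv : ‖x‖ ^ 2 + ‖v‖ ^ 2 ≤ r ^ 2) :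
    |⟪ξ x, -x⟫ + ⟪fderiv ℝ ξ x v, v⟫| ≤ r * M₁ + r ^ 2 * M₂ := by
  have hx : ‖x‖ ≤ r :=
    (pow_le_pow_iff_left₀ (norm_nonneg x) hr two_ne_zero).1 (by nlinarith [sq_nonneg ‖v‖])
  have hv : ‖v‖ ≤ r :=
    (pow_le_pow_iff_left₀ (norm_nonneg v) hr two_ne_zero).1 (by nlinarith [sq_nonneg ‖x‖])
  have hξx : |⟪ξ x, -x⟫| ≤ r * M₁ := calc
    |⟪ξ x, -x⟫| ≤ ‖ξ x‖ * ‖-x‖ := abs_real_inner_le_norm _ _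
    _ ≤ M₁ * r := by
      rw [norm_neg]
      exact mul_le_mul (hM₁ x hx) hx (norm_nonneg _) ((norm_nonneg _).trans (hM₁ x hx))
    _ = r * M₁ := mul_comm _ _
  have hM₂0 : 0 ≤ M₂ := (norm_nonneg _).trans (hM₂ x hx)
  have hDξx : |⟪fderiv ℝ ξ x v, v⟫| ≤ r ^ 2 * M₂ := calc
    |⟪fderiv ℝ ξ x v, v⟫| ≤ ‖fderiv ℝ ξ x‖ * ‖v‖ * ‖v‖ :=
      (abs_real_inner_le_norm _ _).trans (by gcongr; exact (fderiv ℝ ξ x).le_opNorm v)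
    _ ≤ M₂ * r * r :=
      mul_le_mul (mul_le_mul (hM₂ x hx) hv (norm_nonneg _) hM₂0) hv (norm_nonneg _) (by positivity)
    _ = r ^ 2 * M₂ := by ring
  exact (abs_add_le _ _).trans (add_le_add hξx hDξx)

variable [CompleteSpace E]

theorem abs_sub_sub_inner_circleArc_le {U : E → ℝ} {ξ : E → E}
    (hU : ∀ x, HasGradientAt U (ξ x) x) (hξ : Differentiable ℝ ξ) {r M₁ M₂ : ℝ} (hr : 0 ≤ r)
    (hM₁ : ∀ y : E, ‖y‖ ≤ r → ‖ξ y‖ ≤ M₁) (hM₂ : ∀ y : E, ‖y‖ ≤ r → ‖fderiv ℝ ξ y‖ ≤ M₂)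
    {a b : E} (hab : ‖a‖ ^ 2 + ‖b‖ ^ 2 ≤ r ^ 2) (h : ℝ) :
    |U (circleArc a b h) - U a - h * ⟪ξ a, b⟫| ≤ (r * M₁ + r ^ 2 * M₂) * h ^ 2 / 2 := by
  set c := circleArc a b
  set c' := circleArc b (-a)
  have hc' : ∀ t, HasDerivAt c' (-c t) t := fun t =>
    (hasDerivAt_circleArc b (-a) t).congr_deriv (by rw [circleArc_neg_neg])
  have hF : ∀ t, HasDerivAt (fun t => U (c t)) ⟪ξ (c t), c' t⟫ t := fun t => by
    simpa [Function.comp_def] using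
      (hU (c t)).hasFDerivAt.comp_hasDerivAt t (hasDerivAt_circleArc a b t)
  have hF' : ∀ t, HasDerivAt (fun t => ⟪ξ (c t), c' t⟫)
      (⟪ξ (c t), -c t⟫ + ⟪fderiv ℝ ξ (c t) (c' t), c' t⟫) t := fun t =>
    ((hξ (c t)).hasFDerivAt.comp_hasDerivAt t (hasDerivAt_circleArc a b t)).inner ℝ (hc' t)
  have hF'' : ∀ t, ‖⟪ξ (c t), -c t⟫ + ⟪fderiv ℝ ξ (c t) (c' t), c' t⟫‖ ≤ r * M₁ + r ^ 2 * M₂ :=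
    fun t => abs_inner_neg_add_inner_fderiv_le hr hM₁ hM₂
      ((norm_sq_circleArc_add_norm_sq_circleArc a b t).trans_le hab)
  simpa [c, c', circleArc_zero] using norm_sub_sub_smul_le_of_norm_deriv2_le hF hF' hF'' h

theorem abs_sub_circleArc_le_of_inner_eq {U : E → ℝ} {ξ : E → E}
    (hU : ∀ x, HasGradientAt U (ξ x) x) (hξ : Differentiable ℝ ξ) {r M₁ M₂ : ℝ} (hr : 0 ≤ r)
    (hM₁ : ∀ y : E, ‖y‖ ≤ r → ‖ξ y‖ ≤ M₁) (hM₂ : ∀ y : E, ‖y‖ ≤ r → ‖fderiv ℝ ξ y‖ ≤ M₂)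
    {a b b' : E} (hab : ‖a‖ ^ 2 + ‖b‖ ^ 2 ≤ r ^ 2) (hb' : ‖b'‖ = ‖b‖)
    (hinner : ⟪ξ a, b'⟫ = ⟪ξ a, b⟫) (h : ℝ) :
    |U (circleArc a b' h) - U (circleArc a b h)| ≤ h ^ 2 * (r * M₁ + r ^ 2 * M₂) := by
  have hb := abs_sub_sub_inner_circleArc_le hU hξ hr hM₁ hM₂ hab h
  have hb'' := abs_sub_sub_inner_circleArc_le hU hξ hr hM₁ hM₂
    (show ‖a‖ ^ 2 + ‖b'‖ ^ 2 ≤ r ^ 2 by rwa [hb']) h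
  rw [hinner] at hb''
  calc |U (circleArc a b' h) - U (circleArc a b h)|
      = |(U (circleArc a b' h) - U a - h * ⟪ξ a, b⟫)
          - (U (circleArc a b h) - U a - h * ⟪ξ a, b⟫)| := by ring_nf
    _ ≤ _ := abs_sub _ _
    _ ≤ _ := add_le_add hb'' hb
    _ = h ^ 2 * (r * M₁ + r ^ 2 * M₂) := by ring

end CircleArc

theorem circleT_eq_circleArc (d : ℕ) (h : ℝ)
    (z : EuclideanSpace ℝ (Fin d) × EuclideanSpace ℝ (Fin d)) :
    circleT d h z = (circleArc z.1 z.2 h, circleArc z.2 (-z.1) h) :=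
  Prod.ext rfl (by simp only [circleT, circleArc, smul_neg, neg_smul]; abel)

theorem norm_reflT (d : ℕ) (ξ : EuclideanSpace ℝ (Fin d) → EuclideanSpace ℝ (Fin d))
    (x v : EuclideanSpace ℝ (Fin d)) : ‖reflT d ξ x v‖ = ‖v‖ := by
  unfold reflT
  split_ifs with hx
  · exact norm_neg v
  · have hu : ‖xibar d ξ x‖ = 1 := by
      rw [xibar, norm_smul, norm_inv, norm_norm, inv_mul_cancel₀ (norm_ne_zero_iff.2 hx)]
    refine (sq_eq_sq₀ (norm_nonneg _) (norm_nonneg _)).1 ?_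
    rw [norm_sub_sq_real, norm_smul, real_inner_smul_right, hu, real_inner_comm v,
      Real.norm_eq_abs, mul_one, sq_abs]
    ring

theorem inner_reflT (d : ℕ) (ξ : EuclideanSpace ℝ (Fin d) → EuclideanSpace ℝ (Fin d))
    (x v : EuclideanSpace ℝ (Fin d)) : ⟪ξ x, reflT d ξ x v⟫ = -⟪ξ x, v⟫ := by
  unfold reflT
  split_ifs with hx
  · exact inner_neg_right _ _
  · have hn : ‖ξ x‖ ≠ 0 := norm_ne_zero_iff.2 hx
    rw [xibar, inner_sub_right, real_inner_smul_right, real_inner_smul_right, real_inner_smul_left,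
      real_inner_self_eq_norm_sq]
    field_simp
    ring

theorem le_ciSup_closedBall {X : Type*} [PseudoMetricSpace X] [ProperSpace X] {g : X → ℝ}
    (hg : Continuous g) {x y : X} {r : ℝ} (hy : y ∈ Metric.closedBall x r) :
    g y ≤ ⨆ y : Metric.closedBall x r, g y := by
  refine le_ciSup (f := fun y : Metric.closedBall x r => g y) ?_ ⟨y, hy⟩
  rw [← Set.image_eq_range]
  exact (isCompact_closedBall x r).bddAbove_image hg.continuousOn

theorem stmt_12_general (d : ℕ) (U : EuclideanSpace ℝ (Fin d) → ℝ)
    (ξ : EuclideanSpace ℝ (Fin d) → EuclideanSpace ℝ (Fin d))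
    (hgrad : ∀ x, HasGradientAt U (ξ x) x) (hξ_C1 : ContDiff ℝ 1 ξ)
    (r h : ℝ) (hr : 0 < r) :
    ∀ z : EuclideanSpace ℝ (Fin d) × EuclideanSpace ℝ (Fin d),
      ‖z.1‖ ^ 2 + ‖z.2‖ ^ 2 ≤ r ^ 2 →
      |U ((circleT d h (bounceT d ξ (circleT d h z))).1) - U z.1| ≤
        h ^ 2 * (r * (⨆ y : Metric.closedBall (0 : EuclideanSpace ℝ (Fin d)) r, ‖ξ ↑y‖)
          + r ^ 2 * (⨆ y : Metric.closedBall (0 : EuclideanSpace ℝ (Fin d)) r,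
              ‖fderiv ℝ ξ ↑y‖)) := by
  intro ⟨x, v⟩ hz
  have hM₁ : ∀ y, ‖y‖ ≤ r → ‖ξ y‖ ≤ _ := fun y hy =>
    le_ciSup_closedBall hξ_C1.continuous.norm (mem_closedBall_zero_iff.2 hy)
  have hM₂ : ∀ y, ‖y‖ ≤ r → ‖fderiv ℝ ξ y‖ ≤ _ := fun y hy =>
    le_ciSup_closedBall (hξ_C1.continuous_fderiv one_ne_zero).norm (mem_closedBall_zero_iff.2 hy)
  set x₁ := circleArc x v h
  set v₁ := circleArc v (-x) h
  have hrot : ‖x₁‖ ^ 2 + ‖-v₁‖ ^ 2 ≤ r ^ 2 := by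
    rw [norm_neg]; exact (norm_sq_circleArc_add_norm_sq_circleArc x v h).trans_le hz
  calc |U (circleT d h (bounceT d ξ (circleT d h (x, v)))).1 - U x|
      = |U (circleArc x₁ (reflT d ξ x₁ v₁) h) - U (circleArc x₁ (-v₁) h)| := by
        rw [circleArc_circleArc_neg, circleT_eq_circleArc, bounceT, circleT_eq_circleArc]
    _ ≤ _ := abs_sub_circleArc_le_of_inner_eq hgrad (hξ_C1.differentiable one_ne_zero) hr.le
        hM₁ hM₂ hrot (by rw [norm_reflT, norm_neg]) (by rw [inner_reflT, inner_neg_right]) h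

/-- The Weave transform `φ_h = Φ_circle ∘ Φ_bounce ∘ Φ_circle` changes the potential
energy `U` at most by `h²·C(r)` on the ball `{|z| ≤ r}`, where
`C(r) = r·sup_{|y|≤r}|ξ(y)| + r²·sup_{|y|≤r}|∂ξ(y)|`. -/
theorem stmt_12 (d : ℕ) (U : EuclideanSpace ℝ (Fin d) → ℝ)
    (ξ : EuclideanSpace ℝ (Fin d) → EuclideanSpace ℝ (Fin d))
    (hgrad : ∀ x, HasGradientAt U (ξ x) x) (hξ_C1 : ContDiff ℝ 1 ξ)
    (r h : ℝ) (hr : 0 < r) (hh : 0 < h) :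
    ∀ z : EuclideanSpace ℝ (Fin d) × EuclideanSpace ℝ (Fin d),
      ‖z.1‖ ^ 2 + ‖z.2‖ ^ 2 ≤ r ^ 2 →
      |U ((circleT d h (bounceT d ξ (circleT d h z))).1) - U z.1| ≤
        h ^ 2 * (r * (⨆ y : Metric.closedBall (0 : EuclideanSpace ℝ (Fin d)) r, ‖ξ ↑y‖)
          + r ^ 2 * (⨆ y : Metric.closedBall (0 : EuclideanSpace ℝ (Fin d)) r,
              ‖fderiv ℝ ξ ↑y‖)) :=
  stmt_12_general d U ξ hgrad hξ_C1 r h hr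
end

section
/- Let μ be a σ-finite measure on (E,𝓔), Q a μ-reversible Markov kernel, π : E → (0,∞) measurable, and α(x,y) = min{1, π(y)/π(x)}. Let P be the Metropolis kernel P(x,A) = δ_x(A)(1 − ∫_E Q(x,dy)α(x,y)) + ∫_A Q(x,dy)α(x,y). Then for every M ∈ ℕ, every x ∈ E and every A ∈ 𝓔: P^M(x,A) ≤ δ_x(A) + Σ_{m=1}^{M} C(M,m) ∫_A α(x,y) Q^m(x,dy), where Q^m is the m-fold composition of Q and C(M,m) the binomial coefficient. (In particular this uses that α satisfies α(x,y)α(y,z) ≤ α(x,z).) -/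
/-!
The Metropolis kernel is dominated by `δ_x + α(x,·) Q(x,·)`, since a rejection never has
probability more than one. Iterating, `P^M(x,·)` is dominated by
`δ_x + Σ_{m=1}^M C(M,m) α(x,·) Q^m(x,·)`: applying the domination once more to each summand
`α(x,·) Q^m(x,·)` produces itself (the rejection part) plus `∫ α(x,z) α(z,·) Q(z,·) Q^m(x,dz)`,
which the chain rule `α(x,z) α(z,y) ≤ α(x,y)` bounds by `α(x,·) Q^{m+1}(x,·)`; Pascal's rule
then collects the binomial coefficients.
-/

open MeasureTheory ProbabilityTheory
open scoped ENNReal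

theorem Finset.sum_Icc_choose_succ_nsmul {A : Type*} [AddCommMonoid A] (f : ℕ → A) (n : ℕ) :
    ∑ m ∈ Icc 1 (n + 1), (n + 1).choose m • f m =
      ∑ m ∈ Icc 1 n, n.choose m • f m + (f 1 + ∑ m ∈ Icc 1 n, n.choose m • f (m + 1)) := by
  have shift : ∀ (N : ℕ) (g : ℕ → A), ∑ m ∈ Icc 1 N, g m = ∑ i ∈ range N, g (i + 1) := by
    intro N g
    rw [range_eq_Ico, ← Ico_add_one_right_eq_Icc, sum_Ico_add' g 0 N 1]
  simp only [shift, Nat.choose_succ_succ', add_nsmul, sum_add_distrib]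
  rw [sum_range_succ' (fun i => n.choose i • f (i + 1)),
    sum_range_succ (fun i => n.choose (i + 1) • f (i + 1))]
  simp only [Nat.choose_succ_self, Nat.choose_zero_right, zero_smul, one_smul, add_zero]
  abel

open Finset

section Metropolis

variable {E : Type*}

noncomputable def metropolisAcceptance (π : E → ℝ≥0∞) (x y : E) : ℝ≥0∞ := min 1 (π y / π x)

lemma metropolisAcceptance_mul_le (π : E → ℝ≥0∞) (x y z : E) :
    metropolisAcceptance π x y * metropolisAcceptance π y z ≤ metropolisAcceptance π x z := by
  unfold metropolisAcceptance
  -- if `π y` is `0` or `∞`, one of the two factors vanishes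
  rcases eq_or_ne (π y) 0 with hy₀ | hy₀
  · simp [hy₀]
  rcases eq_or_ne (π y) ⊤ with hy | hy
  · simp [hy]
  refine le_min (mul_le_one' (min_le_left _ _) (min_le_left _ _)) ?_
  calc min 1 (π y / π x) * min 1 (π z / π y) ≤ π y / π x * (π z / π y) := by
        gcongr <;> exact min_le_right _ _
    _ = π z / π x := by
        rw [div_eq_mul_inv, mul_right_comm, ← div_eq_mul_inv, ENNReal.mul_div_cancel hy₀ hy,
          div_eq_mul_inv]

variable [MeasurableSpace E]

lemma measurable_metropolisAcceptance {π : E → ℝ≥0∞} (hπ : Measurable π) (x : E) :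
    Measurable (metropolisAcceptance π x) :=
  measurable_const.min (hπ.div measurable_const)

lemma kiter_one (Q : Kernel E E) : kiter Q 1 = Q := Kernel.comp_id Q

lemma le_dirac_add_withDensity {P Q : Kernel E E} {α : E → E → ℝ≥0∞} {x : E}
    (hP : ∀ A, MeasurableSet A →
      P x A = Measure.dirac x A * (1 - ∫⁻ y, α x y ∂(Q x)) + ∫⁻ y in A, α x y ∂(Q x)) :
    P x ≤ Measure.dirac x + (Q x).withDensity (α x) := by
  refine Measure.le_iff.2 fun A hA => ?_
  rw [hP A hA, Measure.add_apply, withDensity_apply _ hA]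
  gcongr
  exact mul_le_of_le_one_right' tsub_le_self

lemma lintegral_mul_setLIntegral_le_setLIntegral_bind {α : E → E → ℝ≥0∞} {x : E}
    (hα : Measurable (α x)) (hα_mul : ∀ y z, α x y * α y z ≤ α x z)
    (ν : Measure E) (κ : Kernel E E) {s : Set E} (hs : MeasurableSet s) :
    ∫⁻ y, α x y * ∫⁻ z in s, α y z ∂(κ y) ∂ν ≤ ∫⁻ z in s, α x z ∂(ν.bind κ) :=
  calc ∫⁻ y, α x y * ∫⁻ z in s, α y z ∂(κ y) ∂ν
      ≤ ∫⁻ y, ∫⁻ z in s, α x y * α y z ∂(κ y) ∂ν :=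
        lintegral_mono fun y => lintegral_const_mul_le _ _
    _ ≤ ∫⁻ y, ∫⁻ z in s, α x z ∂(κ y) ∂ν :=
        lintegral_mono fun y => lintegral_mono fun z => hα_mul y z
    _ = ∫⁻ z in s, α x z ∂(ν.bind κ) := by
        simp_rw [← lintegral_indicator hs]
        exact (Measure.lintegral_bind κ.aemeasurable (hα.indicator hs).aemeasurable).symm

lemma lintegral_apply_withDensity_le {P Q : Kernel E E} {α : E → E → ℝ≥0∞}
    (hα : ∀ x, Measurable (α x)) (hα_mul : ∀ x y z, α x y * α y z ≤ α x z)
    (hP : ∀ y, P y ≤ Measure.dirac y + (Q y).withDensity (α y))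
    (ν : Measure E) (x : E) {s : Set E} (hs : MeasurableSet s) :
    ∫⁻ y, P y s ∂(ν.withDensity (α x))
      ≤ ν.withDensity (α x) s + (ν.bind Q).withDensity (α x) s := by
  have hPs : ∀ y, P y s ≤ s.indicator 1 y + ∫⁻ z in s, α y z ∂(Q y) := fun y => by
    simpa [withDensity_apply _ hs, Measure.dirac_apply' _ hs] using hP y s
  rw [lintegral_withDensity_eq_lintegral_mul _ (hα x) (P.measurable_coe hs),
    withDensity_apply _ hs, withDensity_apply _ hs]
  calc ∫⁻ y, α x y * P y s ∂ν
      ≤ ∫⁻ y, (s.indicator (α x) y + α x y * ∫⁻ z in s, α y z ∂(Q y)) ∂ν := by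
        refine lintegral_mono fun y => (mul_le_mul' le_rfl (hPs y)).trans_eq ?_
        rw [mul_add, ← Set.indicator_mul_right]
        simp only [Pi.one_apply, mul_one]
    _ = ∫⁻ y in s, α x y ∂ν + ∫⁻ y, α x y * ∫⁻ z in s, α y z ∂(Q y) ∂ν := by
        rw [lintegral_add_left ((hα x).indicator hs), lintegral_indicator hs]
    _ ≤ ∫⁻ y in s, α x y ∂ν + ∫⁻ z in s, α x z ∂(ν.bind Q) :=
        add_le_add le_rfl
          (lintegral_mul_setLIntegral_le_setLIntegral_bind (hα x) (hα_mul x) ν Q hs)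

theorem kiter_le_dirac_add_sum_choose_nsmul {P Q : Kernel E E} {α : E → E → ℝ≥0∞}
    (hα : ∀ x, Measurable (α x)) (hα_mul : ∀ x y z, α x y * α y z ≤ α x z)
    (hP : ∀ y, P y ≤ Measure.dirac y + (Q y).withDensity (α y)) (M : ℕ) (x : E) :
    kiter P M x ≤
      Measure.dirac x + ∑ m ∈ Icc 1 M, M.choose m • (kiter Q m x).withDensity (α x) := by
  induction M with
  | zero => simp [kiter, Kernel.id_apply]
  | succ M ih =>
    set ν : ℕ → Measure E := fun m => (kiter Q m x).withDensity (α x)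
    refine Measure.le_iff.2 fun s hs => ?_
    calc kiter P (M + 1) x s = ∫⁻ y, P y s ∂(kiter P M x) := Kernel.comp_apply' _ _ _ hs
      _ ≤ ∫⁻ y, P y s ∂(Measure.dirac x + ∑ m ∈ Icc 1 M, M.choose m • ν m) :=
        lintegral_mono' ih le_rfl
      _ = P x s + ∑ m ∈ Icc 1 M, M.choose m • ∫⁻ y, P y s ∂(ν m) := by
        simp only [lintegral_add_measure, lintegral_dirac' x (P.measurable_coe hs),
          lintegral_finsetSum_measure, lintegral_smul_measure]
      _ ≤ (Measure.dirac x s + ν 1 s) + ∑ m ∈ Icc 1 M, M.choose m • (ν m s + ν (m + 1) s) := by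
        gcongr with m
        · simpa [ν, kiter_one, withDensity_apply _ hs] using hP x s
        · exact lintegral_apply_withDensity_le hα hα_mul hP (kiter Q m x) x hs
      _ = (Measure.dirac x + ∑ m ∈ Icc 1 (M + 1), (M + 1).choose m • ν m) s := by
        simp only [Measure.add_apply, Measure.finsetSum_apply, Measure.smul_apply,
          sum_Icc_choose_succ_nsmul (fun m => ν m s), smul_add, sum_add_distrib]
        abel

end Metropolis

theorem stmt_18_general {E : Type*} [MeasurableSpace E]
    (Q : Kernel E E)
    (π : E → ℝ≥0∞) (hπ_meas : Measurable π)
    (P : Kernel E E)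
    (hP : ∀ (x : E) (A : Set E), MeasurableSet A →
      P x A = Measure.dirac x A * (1 - ∫⁻ y, min 1 (π y / π x) ∂(Q x))
        + ∫⁻ y in A, min 1 (π y / π x) ∂(Q x)) :
    ∀ (M : ℕ) (x : E) (A : Set E), MeasurableSet A →
      kiter P M x A ≤ Measure.dirac x A
        + ∑ m ∈ Finset.Icc 1 M,
            (M.choose m : ℝ≥0∞) * ∫⁻ y in A, min 1 (π y / π x) ∂(kiter Q m x) := by
  intro M x A hA
  have hdom : ∀ y, P y ≤ Measure.dirac y + (Q y).withDensity (metropolisAcceptance π y) :=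
    fun y => le_dirac_add_withDensity (hP y)
  simpa [Measure.finsetSum_apply, withDensity_apply _ hA, metropolisAcceptance] using
    Measure.le_iff'.1 (kiter_le_dirac_add_sum_choose_nsmul
      (measurable_metropolisAcceptance hπ_meas) (metropolisAcceptance_mul_le π) hdom M x) A

/-- The iterates of the Metropolis kernel `P` with proposal `Q` and acceptance probability
`α(x,y) = min{1, π(y)/π(x)}` satisfy
`P^M(x,A) ≤ δ_x(A) + Σ_{m=1}^M C(M,m) ∫_A α(x,y) Q^m(x,dy)`. -/
theorem stmt_18 {E : Type*} [MeasurableSpace E] (μ : Measure E) [SigmaFinite μ]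
    (Q : Kernel E E) [IsMarkovKernel Q]
    (hQrev : ∀ A B : Set E, MeasurableSet A → MeasurableSet B →
      ∫⁻ x in A, Q x B ∂μ = ∫⁻ x in B, Q x A ∂μ)
    (π : E → ℝ≥0∞) (hπ_meas : Measurable π)
    (hπ_pos : ∀ x, 0 < π x) (hπ_fin : ∀ x, π x ≠ ⊤)
    (P : Kernel E E)
    (hP : ∀ (x : E) (A : Set E), MeasurableSet A →
      P x A = Measure.dirac x A * (1 - ∫⁻ y, min 1 (π y / π x) ∂(Q x))
        + ∫⁻ y in A, min 1 (π y / π x) ∂(Q x)) :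
    ∀ (M : ℕ) (x : E) (A : Set E), MeasurableSet A →
      kiter P M x A ≤ Measure.dirac x A
        + ∑ m ∈ Finset.Icc 1 M,
            (M.choose m : ℝ≥0∞) * ∫⁻ y in A, min 1 (π y / π x) ∂(kiter Q m x) :=
  stmt_18_general Q π hπ_meas P hP
end
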